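/- arXiv:2603.07575 — 8 statements merged into one kernel-verified Lean document; each statement's English description precedes it below -/
import Mathlib

section
/- The set K_l is closed under the maps x ↦ x/(2l+2) and x ↦ (x+d)/(2l+2) for any d ∈ T_l, and consequently K_l contains a dense subset of the interval [(2l+1)/(2l+2), 1]: for every a ∈ [(2l+1)/(2l+2), 1] and every ε > 0 there exists b ∈ K_l with |a − b| < ε. -/
open MeasureTheory

def Tl (l : ℕ) : Set ℕ :=
  {d | (Even d ∧ d ≤ 2 * l) ∨ (Odd d ∧ 2 * l + 1 ≤ d ∧ d ≤ 4 * l + 1)}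

def Kl (l : ℕ) : Set ℝ :=
  {x | ∃ ε : ℕ → ℕ, (∀ i, ε i ∈ Tl l) ∧
    x = ∑' i : ℕ, (ε i : ℝ) / (2 * l + 2) ^ (i + 1)}

lemma Tl_le {l d : ℕ} (h : d ∈ Tl l) : d ≤ 4 * l + 1 := by
  rcases h with ⟨_, h⟩ | ⟨_, _, h⟩ <;> omega

lemma zero_mem_Tl (l : ℕ) : 0 ∈ Tl l := Or.inl ⟨Even.zero, by omega⟩

lemma summable_aux (l : ℕ) (ε : ℕ → ℕ) (hε : ∀ i, ε i ∈ Tl l) :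
    Summable (fun i : ℕ => (ε i : ℝ) / (2 * l + 2) ^ (i + 1)) := by
  have hB : (1 : ℝ) < 2 * l + 2 := by
    have : (0:ℝ) ≤ (l:ℝ) := Nat.cast_nonneg l
    linarith
  have hB0 : (0 : ℝ) < 2 * l + 2 := by linarith
  have hgeo : Summable (fun i : ℕ => (4 * (l:ℝ) + 1) * (1 / (2 * l + 2)) ^ i) := by
    apply Summable.mul_left
    apply summable_geometric_of_lt_one (by positivity)
    rw [div_lt_one hB0]; linarith
  apply Summable.of_nonneg_of_le (fun i => by positivity) _ hgeo
  intro i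
  have h1 : ((ε i : ℝ)) ≤ 4 * (l:ℝ) + 1 := by
    have h := Tl_le (hε i)
    have : (ε i : ℝ) ≤ ((4 * l + 1 : ℕ) : ℝ) := Nat.cast_le.mpr h
    push_cast at this; linarith
  have hpow : (0:ℝ) < (2 * l + 2) ^ (i+1) := by positivity
  have hpow2 : ((2 * (l:ℝ) + 2)) ^ i ≤ (2 * l + 2) ^ (i + 1) := by
    apply pow_le_pow_right₀ (le_of_lt hB); omega
  calc (ε i : ℝ) / (2 * l + 2) ^ (i + 1) ≤ (4 * l + 1) / (2 * l + 2) ^ (i + 1) := by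
        gcongr
    _ ≤ (4 * l + 1) / (2 * l + 2) ^ i := by
        gcongr
    _ = (4 * (l:ℝ) + 1) * (1 / (2 * l + 2)) ^ i := by
        rw [one_div, inv_pow, div_eq_mul_inv]

lemma zero_mem_Kl (l : ℕ) : (0 : ℝ) ∈ Kl l := by
  refine ⟨fun _ => 0, fun i => zero_mem_Tl l, ?_⟩
  simp

lemma Kl_map (l : ℕ) {d : ℕ} (hd : d ∈ Tl l) {x : ℝ} (hx : x ∈ Kl l) :
    (x + d) / (2 * l + 2) ∈ Kl l := by
  obtain ⟨ε, hε, hxe⟩ := hx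
  have hB0 : (0 : ℝ) < 2 * l + 2 := by positivity
  set ε' : ℕ → ℕ := fun n => Nat.rec d (fun i _ => ε i) n with hε'
  have hε'mem : ∀ i, ε' i ∈ Tl l := by
    intro i; cases i with
    | zero => exact hd
    | succ n => exact hε n
  refine ⟨ε', hε'mem, ?_⟩
  have hsum : Summable (fun i : ℕ => (ε' i : ℝ) / (2 * l + 2) ^ (i + 1)) :=
    summable_aux l ε' hε'mem
  have h1 : ∀ i : ℕ, ((ε' (i+1) : ℝ)) / (2 * l + 2) ^ (i + 1 + 1)
      = ((ε i : ℝ) / (2 * l + 2) ^ (i + 1)) / (2 * l + 2) := by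
    intro i
    rw [pow_succ ((2:ℝ) * l + 2) (i+1), div_div]
  have h2 : (∑' i : ℕ, ((ε' (i+1) : ℝ)) / (2 * l + 2) ^ (i + 1 + 1))
      = (∑' i : ℕ, (ε i : ℝ) / (2 * l + 2) ^ (i + 1)) / (2 * l + 2) := by
    rw [← tsum_div_const]
    exact tsum_congr h1
  rw [Summable.tsum_eq_zero_add hsum, h2, ← hxe]
  show (x + (d:ℝ)) / (2 * l + 2) = (d:ℝ) / (2 * l + 2) ^ (0 + 1) + x / (2 * l + 2)
  rw [zero_add, pow_one, add_div, add_comm ((d:ℝ)/(2*(l:ℝ)+2))]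

lemma approx_calc {B : ℝ} (hB : 0 < B) {g t c : ℝ} (h : |g - t| ≤ c) (d : ℝ) :
    |(g + d) / B - (t + d) / B| ≤ c / B := by
  have he : (g + d) / B - (t + d) / B = (g - t) / B := by
    field_simp
    ring
  rw [he, abs_div, abs_of_pos hB]
  gcongr

lemma dense_aux (l : ℕ) (hl : 1 ≤ l) :
    ∀ n : ℕ, ∀ r : ℝ, 0 ≤ r → r ≤ 1 →
      (∃ g ∈ Kl l, |g - r| ≤ 2 / (2 * l + 2) ^ n) ∨
      (∃ g ∈ Kl l, |g - (1 + r)| ≤ 2 / (2 * l + 2) ^ n) := by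
  have hB0 : (0 : ℝ) < 2 * l + 2 := by positivity
  intro n
  induction n with
  | zero =>
    intro r hr0 hr1
    left
    refine ⟨0, zero_mem_Kl l, ?_⟩
    rw [abs_sub_comm, pow_zero, sub_zero, abs_of_nonneg hr0]
    linarith
  | succ n ih =>
    intro r hr0 hr1
    obtain ⟨j, hj_le, hj1, hj2⟩ :
        ∃ j : ℕ, j ≤ 2 * l + 1 ∧ (j : ℝ) ≤ (2 * l + 2) * r ∧ (2 * l + 2) * r ≤ j + 1 := by
      have hBr0 : (0:ℝ) ≤ (2 * l + 2) * r := by positivity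
      by_cases hc : ⌊(2 * (l:ℝ) + 2) * r⌋₊ ≤ 2 * l + 1
      · exact ⟨⌊(2 * (l:ℝ) + 2) * r⌋₊, hc, Nat.floor_le hBr0,
          le_of_lt (Nat.lt_floor_add_one _)⟩
      · refine ⟨2 * l + 1, le_refl _, ?_, ?_⟩
        · push_neg at hc
          have h2 : ((2 * l + 2 : ℕ) : ℝ) ≤ ⌊(2 * (l:ℝ) + 2) * r⌋₊ := by exact_mod_cast hc
          have h3 : ((⌊(2 * (l:ℝ) + 2) * r⌋₊ : ℕ) : ℝ) ≤ (2 * l + 2) * r :=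
            Nat.floor_le hBr0
          push_cast at h2 ⊢
          linarith
        · have : (2 * (l:ℝ) + 2) * r ≤ 2 * l + 2 := by nlinarith
          push_cast; linarith
    set s : ℝ := (2 * l + 2) * r - j with hsdef
    have hs0 : 0 ≤ s := by rw [hsdef]; linarith
    have hs1 : s ≤ 1 := by rw [hsdef]; linarith
    have hr_eq : r = (s + j) / (2 * l + 2) := by
      rw [hsdef]; field_simp; ring
    have hpow : (2 / (2 * (l:ℝ) + 2) ^ n) / (2 * l + 2) = 2 / (2 * l + 2) ^ (n + 1) := by
      rw [div_div, ← pow_succ]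
    rcases Nat.even_or_odd j with hje | hjo
    · -- j even, so j ≤ 2l
      have hjle : j ≤ 2 * l := by
        rcases Nat.lt_or_ge j (2*l+1) with h | h
        · omega
        · exfalso
          have hj : j = 2*l+1 := le_antisymm hj_le h
          rw [hj] at hje
          rcases hje with ⟨k, hk⟩; omega
      rcases ih s hs0 hs1 with ⟨g, hg, hgs⟩ | ⟨g, hg, hgs⟩
      · left
        refine ⟨(g + (j:ℝ)) / (2 * l + 2), Kl_map l (Or.inl ⟨hje, hjle⟩) hg, ?_⟩
        rw [hr_eq, ← hpow]
        exact approx_calc hB0 hgs _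
      · right
        have hd : j + (2 * l + 1) ∈ Tl l := by
          refine Or.inr ⟨?_, by omega, by omega⟩
          rcases hje with ⟨k, hk⟩
          exact ⟨k + l, by omega⟩
        refine ⟨(g + ((j + (2 * l + 1) : ℕ) : ℝ)) / (2 * l + 2), Kl_map l hd hg, ?_⟩
        have h1r : 1 + r = ((1 + s) + ((j + (2 * l + 1) : ℕ) : ℝ)) / (2 * l + 2) := by
          rw [hr_eq]; push_cast; field_simp; ring
        rw [h1r, ← hpow]
        exact approx_calc hB0 hgs _
    · rcases Nat.lt_or_ge j (2 * l + 1) with hjlt | hjge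
      · -- j odd, j ≤ 2l - 1
        rcases ih s hs0 hs1 with ⟨g, hg, hgs⟩ | ⟨g, hg, hgs⟩
        · right
          have hd : j + (2 * l + 2) ∈ Tl l := by
            refine Or.inr ⟨?_, by omega, ?_⟩
            · rcases hjo with ⟨k, hk⟩
              exact ⟨k + l + 1, by omega⟩
            · rcases hjo with ⟨k, hk⟩; omega
          refine ⟨(g + ((j + (2 * l + 2) : ℕ) : ℝ)) / (2 * l + 2), Kl_map l hd hg, ?_⟩
          have h1r : 1 + r = (s + ((j + (2 * l + 2) : ℕ) : ℝ)) / (2 * l + 2) := by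
            rw [hr_eq]; push_cast; field_simp; ring
          rw [h1r, ← hpow]
          exact approx_calc hB0 hgs _
        · left
          have hj1' : 1 ≤ j := by rcases hjo with ⟨k, hk⟩; omega
          have hd : j - 1 ∈ Tl l := by
            refine Or.inl ⟨?_, by omega⟩
            rcases hjo with ⟨k, hk⟩
            exact ⟨k, by omega⟩
          refine ⟨(g + ((j - 1 : ℕ) : ℝ)) / (2 * l + 2), Kl_map l hd hg, ?_⟩
          have hcast : ((j - 1 : ℕ) : ℝ) = (j : ℝ) - 1 := by
            rw [Nat.cast_sub hj1']; simp
          have hre : r = ((1 + s) + ((j - 1 : ℕ) : ℝ)) / (2 * l + 2) := by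
            rw [hr_eq, hcast]; ring
          rw [hre, ← hpow]
          exact approx_calc hB0 hgs _
      · -- j = 2l + 1
        have hjeq : j = 2 * l + 1 := le_antisymm hj_le hjge
        rcases ih s hs0 hs1 with ⟨g, hg, hgs⟩ | ⟨g, hg, hgs⟩
        · left
          have hd : 2 * l + 1 ∈ Tl l := Or.inr ⟨⟨l, by omega⟩, by omega, by omega⟩
          refine ⟨(g + ((2 * l + 1 : ℕ) : ℝ)) / (2 * l + 2), Kl_map l hd hg, ?_⟩
          have hre : r = (s + ((2 * l + 1 : ℕ) : ℝ)) / (2 * l + 2) := by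
            rw [hr_eq, hjeq]
          rw [hre, ← hpow]
          exact approx_calc hB0 hgs _
        · left
          have hd : 2 * l ∈ Tl l := Or.inl ⟨even_two_mul l, le_refl _⟩
          refine ⟨(g + ((2 * l : ℕ) : ℝ)) / (2 * l + 2), Kl_map l hd hg, ?_⟩
          have hre : r = ((1 + s) + ((2 * l : ℕ) : ℝ)) / (2 * l + 2) := by
            rw [hr_eq, hjeq]; push_cast; ring
          rw [hre, ← hpow]
          exact approx_calc hB0 hgs _

theorem stmt4 (l : ℕ) (hl : 1 ≤ l) :
    (∀ x ∈ Kl l, x / (2 * l + 2) ∈ Kl l) ∧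
    (∀ d ∈ Tl l, ∀ x ∈ Kl l, (x + d) / (2 * l + 2) ∈ Kl l) ∧
    (∀ a ∈ Set.Icc ((2 * l + 1) / (2 * l + 2) : ℝ) 1, ∀ ε > (0 : ℝ),
      ∃ b ∈ Kl l, |a - b| < ε) := by
  have hB0 : (0 : ℝ) < 2 * l + 2 := by positivity
  have hB1 : (1 : ℝ) < 2 * l + 2 := by
    have : (0:ℝ) ≤ (l:ℝ) := Nat.cast_nonneg l
    linarith
  refine ⟨?_, ?_, ?_⟩
  · intro x hx
    have := Kl_map l (zero_mem_Tl l) hx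
    simpa using this
  · intro d hd x hx
    exact Kl_map l hd hx
  · intro a ha ε hε
    obtain ⟨ha1, ha2⟩ := ha
    obtain ⟨n, hn⟩ := pow_unbounded_of_one_lt (2 / ε) hB1
    have hBn : (0:ℝ) < (2 * (l:ℝ) + 2) ^ n := by positivity
    have hlt : 2 / (2 * (l:ℝ) + 2) ^ n < ε := by
      rw [div_lt_iff₀ hBn]
      rw [div_lt_iff₀ hε] at hn
      linarith [hn]
    set r : ℝ := (2 * l + 2) * a - (2 * l + 1) with hrdef
    have hr0 : 0 ≤ r := by
      rw [hrdef]
      have h := mul_le_mul_of_nonneg_right ha1 (le_of_lt hB0)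
      rw [div_mul_cancel₀ _ (ne_of_gt hB0)] at h
      linarith
    have hr1 : r ≤ 1 := by
      rw [hrdef]; nlinarith
    have ha_eq : a = (r + ((2 * l + 1 : ℕ) : ℝ)) / (2 * l + 2) := by
      rw [hrdef]; push_cast; field_simp; ring
    rcases dense_aux l hl n r hr0 hr1 with ⟨g, hg, hgr⟩ | ⟨g, hg, hgr⟩
    · have hd : 2 * l + 1 ∈ Tl l := Or.inr ⟨⟨l, by omega⟩, by omega, by omega⟩
      refine ⟨(g + ((2 * l + 1 : ℕ) : ℝ)) / (2 * l + 2), Kl_map l hd hg, ?_⟩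
      rw [abs_sub_comm, ha_eq]
      calc |(g + ((2 * l + 1 : ℕ) : ℝ)) / (2 * (l:ℝ) + 2) - (r + ((2 * l + 1 : ℕ) : ℝ)) / (2 * l + 2)|
          ≤ (2 / (2 * (l:ℝ) + 2) ^ n) / (2 * l + 2) := approx_calc hB0 hgr _
        _ ≤ 2 / (2 * (l:ℝ) + 2) ^ n := div_le_self (by positivity) (le_of_lt hB1)
        _ < ε := hlt
    · have hd : 2 * l ∈ Tl l := Or.inl ⟨even_two_mul l, le_refl _⟩
      refine ⟨(g + ((2 * l : ℕ) : ℝ)) / (2 * l + 2), Kl_map l hd hg, ?_⟩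
      have ha_eq2 : a = ((1 + r) + ((2 * l : ℕ) : ℝ)) / (2 * l + 2) := by
        rw [ha_eq]; push_cast; ring
      rw [abs_sub_comm, ha_eq2]
      calc |(g + ((2 * l : ℕ) : ℝ)) / (2 * (l:ℝ) + 2) - ((1 + r) + ((2 * l : ℕ) : ℝ)) / (2 * l + 2)|
          ≤ (2 / (2 * (l:ℝ) + 2) ^ n) / (2 * l + 2) := approx_calc hB0 hgr _
        _ ≤ 2 / (2 * (l:ℝ) + 2) ^ n := div_le_self (by positivity) (le_of_lt hB1)
        _ < ε := hlt
end

section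
/- Every finite base-(2l+2) expansion value with digits in {0,...,2l+1} whose first digit is 2l+1 can be rewritten with digits in T_l: for every k ≥ 1 and every (a_1,...,a_k) ∈ {0,...,2l+1}^k with a_1 = 2l+1, there exists (b_1,...,b_k) ∈ T_l^k such that ∑_{i=1}^k a_i/(2l+2)^i = ∑_{i=1}^k b_i/(2l+2)^i. -/
open MeasureTheory

lemma mem_Tl_iff (l d : ℕ) : d ∈ Tl l ↔
    (d % 2 = 0 ∧ d ≤ 2 * l) ∨ (d % 2 = 1 ∧ 2 * l + 1 ≤ d ∧ d ≤ 4 * l + 1) := by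
  simp [Tl, Nat.even_iff, Nat.odd_iff]

open Classical in
noncomputable def dconv (l : ℕ) : List ℕ → List ℕ × ℕ
  | [] => ([], 0)
  | a :: rest =>
    let p := dconv l rest
    if p.2 ≤ a ∧ (a - p.2) ∈ Tl l then ((a - p.2) :: p.1, 0)
    else ((a + 2 * l + 2 - p.2) :: p.1, 1)

lemma dconv_carry_le (l : ℕ) (ds : List ℕ) : (dconv l ds).2 ≤ 1 := by
  cases ds with
  | nil => simp [dconv]
  | cons a rest =>
    rw [dconv]
    split <;> simp

lemma dconv_length (l : ℕ) (ds : List ℕ) : (dconv l ds).1.length = ds.length := by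
  induction ds with
  | nil => simp [dconv]
  | cons a rest ih =>
    rw [dconv]
    split <;> simpa using ih

lemma dconv_mem (l : ℕ) (hl : 1 ≤ l) (ds : List ℕ) (hd : ∀ d ∈ ds, d ≤ 2 * l + 1) :
    ∀ b ∈ (dconv l ds).1, b ∈ Tl l := by
  induction ds with
  | nil => simp [dconv]
  | cons a rest ih =>
    have ha : a ≤ 2 * l + 1 := hd a (by simp)
    have hrest := ih (fun d hdm => hd d (by simp [hdm]))
    have hc : (dconv l rest).2 ≤ 1 := dconv_carry_le l rest
    rw [dconv]
    split
    · next h =>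
      intro b hb
      rcases List.mem_cons.1 hb with rfl | hb
      · exact h.2
      · exact hrest b hb
    · next h =>
      intro b hb
      rcases List.mem_cons.1 hb with rfl | hb
      · -- two cases: carry > a, or a - carry odd small
        rw [mem_Tl_iff]
        set c := (dconv l rest).2 with hcdef
        by_cases hca : c ≤ a
        · have hnot : ¬ (a - c) ∈ Tl l := fun hm => h ⟨hca, hm⟩
          rw [mem_Tl_iff] at hnot
          push_neg at hnot
          -- derive a - c odd and ≤ 2l - 1
          right
          omega
        · -- c = 1, a = 0, b = 2l+1
          right
          omega
      · exact hrest b hb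

lemma dconv_carry_head (l : ℕ) (rest : List ℕ) :
    (dconv l ((2 * l + 1) :: rest)).2 = 0 := by
  rw [dconv]
  have hc : (dconv l rest).2 ≤ 1 := dconv_carry_le l rest
  split
  · rfl
  · next h =>
    exfalso
    apply h
    refine ⟨by omega, ?_⟩
    rw [mem_Tl_iff]
    interval_cases (dconv l rest).2
    · right; omega
    · left; omega

noncomputable def lsum (l : ℕ) : List ℕ → ℝ
  | [] => 0
  | a :: rest => (a : ℝ) / (2 * l + 2) + lsum l rest / (2 * l + 2)

lemma dconv_sum (l : ℕ) (ds : List ℕ) :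
    lsum l ds = lsum l (dconv l ds).1 - ((dconv l ds).2 : ℝ) := by
  induction ds with
  | nil => simp [dconv, lsum]
  | cons a rest ih =>
    have hM : (2 * (l : ℝ) + 2) ≠ 0 := by positivity
    rw [dconv]
    have hc : (dconv l rest).2 ≤ 1 := dconv_carry_le l rest
    split
    · next h =>
      simp only [lsum, ih]
      have : ((a - (dconv l rest).2 : ℕ) : ℝ) = (a : ℝ) - ((dconv l rest).2 : ℝ) := by
        exact_mod_cast Nat.cast_sub h.1
      rw [this]
      push_cast
      field_simp
      ring
    · next h =>
      simp only [lsum, ih]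
      have hle : (dconv l rest).2 ≤ a + 2 * l + 2 := by omega
      have : ((a + 2 * l + 2 - (dconv l rest).2 : ℕ) : ℝ)
          = (a : ℝ) + 2 * l + 2 - ((dconv l rest).2 : ℝ) := by
        push_cast [Nat.cast_sub hle]; ring
      rw [this]
      push_cast
      field_simp
      ring

lemma lsum_ofFn (l : ℕ) : ∀ (k : ℕ) (f : Fin k → ℕ),
    lsum l (List.ofFn f) = ∑ i : Fin k, (f i : ℝ) / (2 * l + 2) ^ (i.val + 1) := by
  intro k
  induction k with
  | zero => intro f; simp [lsum]
  | succ n ih =>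
    intro f
    rw [List.ofFn_succ, Fin.sum_univ_succ]
    simp only [lsum, ih]
    rw [Finset.sum_div]
    congr 1
    · simp
    · apply Finset.sum_congr rfl
      intro i _
      simp only [Fin.val_succ]
      rw [div_div, ← pow_succ]

theorem stmt5 (l : ℕ) (hl : 1 ≤ l) (k : ℕ) (hk : 1 ≤ k)
    (a : Fin k → ℕ) (ha : ∀ i, a i ≤ 2 * l + 1) (ha1 : a ⟨0, hk⟩ = 2 * l + 1) :
    ∃ b : Fin k → ℕ, (∀ i, b i ∈ Tl l) ∧
      ∑ i : Fin k, (a i : ℝ) / (2 * l + 2) ^ (i.val + 1) =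
      ∑ i : Fin k, (b i : ℝ) / (2 * l + 2) ^ (i.val + 1) := by
  obtain ⟨k', rfl⟩ : ∃ k', k = k' + 1 := ⟨k - 1, by omega⟩
  set L := List.ofFn a with hL
  set bs := (dconv l L).1 with hbs
  have hlen : bs.length = k' + 1 := by rw [hbs, dconv_length, hL, List.length_ofFn]
  refine ⟨fun i => bs.getD i 0, ?_, ?_⟩
  · intro i
    have : bs.getD i 0 ∈ bs := by
      rw [List.getD_eq_getElem _ _ (by omega)]
      exact List.getElem_mem _
    refine dconv_mem l hl L ?_ _ this
    intro d hd
    rw [hL, List.mem_ofFn] at hd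
    obtain ⟨i, rfl⟩ := hd
    exact ha i
  · have hofn : List.ofFn (fun i : Fin (k' + 1) => bs.getD i 0) = bs := by
      apply List.ext_getElem
      · simp [hlen]
      · intro n h1 h2
        simp only [List.getElem_ofFn]
        rw [List.getD_eq_getElem]
    have hcarry : (dconv l L).2 = 0 := by
      have : L = (2 * l + 1) :: List.ofFn (fun i : Fin k' => a i.succ) := by
        rw [hL, List.ofFn_succ]
        simp only [show a 0 = 2 * l + 1 from ha1]
      rw [this]
      exact dconv_carry_head l _
    have := dconv_sum l L
    rw [hcarry] at this
    simp only [Nat.cast_zero, sub_zero] at this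
    calc ∑ i : Fin (k' + 1), (a i : ℝ) / (2 * l + 2) ^ (i.val + 1)
        = lsum l L := (lsum_ofFn l (k' + 1) a).symm
      _ = lsum l bs := this
      _ = ∑ i : Fin (k' + 1), ((bs.getD i 0 : ℕ) : ℝ) / (2 * l + 2) ^ (i.val + 1) := by
          conv_lhs => rw [← hofn]
          exact lsum_ofFn l (k' + 1) _
end

section
/- The interval [(2l)/(2l+1), 1] is entirely contained in K_l. -/
open MeasureTheory

namespace Stmt6Aux

lemma mem_Tl_of (l d : ℕ)
    (h : (d % 2 = 0 ∧ d ≤ 2*l) ∨ (d % 2 = 1 ∧ 2*l+1 ≤ d ∧ d ≤ 4*l+1)) : d ∈ Tl l := by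
  rcases h with ⟨h1, h2⟩ | ⟨h1, h2, h3⟩
  · exact Or.inl ⟨Nat.even_iff.mpr h1, h2⟩
  · exact Or.inr ⟨Nat.odd_iff.mpr h1, h2, h3⟩

lemma Tl_le {l d : ℕ} (h : d ∈ Tl l) : d ≤ 4*l+1 := by
  rcases h with ⟨_, h2⟩ | ⟨_, _, h3⟩ <;> omega

lemma Tl_mod (l : ℕ) {d : ℕ} (h : d ∈ Tl l) :
    (d % 2 = 0 ∧ d ≤ 2*l) ∨ (d % 2 = 1 ∧ 2*l+1 ≤ d ∧ d ≤ 4*l+1) := by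
  rcases h with ⟨h1, h2⟩ | ⟨h1, h2, h3⟩
  · exact Or.inl ⟨Nat.even_iff.mp h1, h2⟩
  · exact Or.inr ⟨Nat.odd_iff.mp h1, h2, h3⟩

lemma hb_pos (l : ℕ) : (0:ℝ) < 2*(l:ℝ)+2 := by positivity

lemma h21_pos (l : ℕ) : (0:ℝ) < 2*(l:ℝ)+1 := by positivity

lemma hb_gt1 (l : ℕ) : (1:ℝ) < 2*(l:ℝ)+2 := by
  have : (0:ℝ) ≤ (l:ℝ) := Nat.cast_nonneg l
  linarith

lemma summable_geom_aux (l : ℕ) (C : ℝ) :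
    Summable (fun i : ℕ => C/(2*(l:ℝ)+2)^(i+1)) := by
  have h0 : (0:ℝ) ≤ 1/(2*(l:ℝ)+2) := by positivity
  have h1 : (1:ℝ)/(2*(l:ℝ)+2) < 1 := by
    rw [div_lt_one (hb_pos l)]; exact hb_gt1 l
  have hbne : (2*(l:ℝ)+2) ≠ 0 := ne_of_gt (hb_pos l)
  have h2 := (summable_geometric_of_lt_one h0 h1).mul_left (C/(2*(l:ℝ)+2))
  apply h2.congr
  intro i
  rw [one_div, inv_pow, pow_succ]
  field_simp

lemma tsum_const_div (l : ℕ) (C : ℝ) :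
    ∑' i : ℕ, C/(2*(l:ℝ)+2)^(i+1) = C/(2*(l:ℝ)+1) := by
  have h0 : (0:ℝ) ≤ 1/(2*(l:ℝ)+2) := by positivity
  have h1 : (1:ℝ)/(2*(l:ℝ)+2) < 1 := by
    rw [div_lt_one (hb_pos l)]; exact hb_gt1 l
  have hbne : (2*(l:ℝ)+2) ≠ 0 := ne_of_gt (hb_pos l)
  have h21ne : (2*(l:ℝ)+1) ≠ 0 := ne_of_gt (h21_pos l)
  have e1 : ∀ i : ℕ, C/(2*(l:ℝ)+2)^(i+1) = (C/(2*(l:ℝ)+2)) * (1/(2*(l:ℝ)+2))^i := by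
    intro i; rw [one_div, inv_pow, pow_succ]; field_simp
  rw [tsum_congr e1, tsum_mul_left, tsum_geometric_of_lt_one h0 h1]
  rw [show (1:ℝ) - 1/(2*(l:ℝ)+2) = (2*(l:ℝ)+1)/(2*(l:ℝ)+2) by field_simp; ring]
  rw [inv_div]
  field_simp

lemma summable_digits (l : ℕ) (f : ℕ → ℕ) (hf : ∀ i, f i ≤ 4*l+1) :
    Summable (fun i => (f i:ℝ)/(2*(l:ℝ)+2)^(i+1)) := by
  apply Summable.of_nonneg_of_le (fun i => by positivity) (fun i => ?_)
    (summable_geom_aux l (4*(l:ℝ)+1))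
  have h : (f i : ℝ) ≤ 4*(l:ℝ)+1 := by
    have h2 := (Nat.cast_le (α := ℝ)).mpr (hf i)
    push_cast at h2
    linarith
  gcongr

lemma zero_mem (l : ℕ) : (0:ℝ) ∈ Kl l := by
  refine ⟨fun _ => 0, fun i => mem_Tl_of l 0 (by omega), ?_⟩
  simp

def consD (d : ℕ) (ε : ℕ → ℕ) : ℕ → ℕ
  | 0 => d
  | n+1 => ε n

lemma prepend_mem (l : ℕ) {d : ℕ} (hd : d ∈ Tl l) {y : ℝ} (hy : y ∈ Kl l) :
    (y + (d:ℝ))/(2*(l:ℝ)+2) ∈ Kl l := by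
  obtain ⟨ε, hε, rfl⟩ := hy
  have hbne : (2*(l:ℝ)+2) ≠ 0 := ne_of_gt (hb_pos l)
  have hsum2 : Summable (fun i => ((consD d ε i : ℕ):ℝ)/(2*(l:ℝ)+2)^(i+1)) := by
    apply summable_digits l
    intro i
    cases i with
    | zero => exact Tl_le hd
    | succ n => exact Tl_le (hε n)
  refine ⟨consD d ε, ?_, ?_⟩
  · intro i
    cases i with
    | zero => exact hd
    | succ n => exact hε n
  · rw [Summable.tsum_eq_zero_add hsum2]
    have e2 : ∀ i : ℕ, ((consD d ε (i+1) : ℕ):ℝ)/(2*(l:ℝ)+2)^(i+1+1)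
        = ((ε i:ℝ)/(2*(l:ℝ)+2)^(i+1)) * (1/(2*(l:ℝ)+2)) := by
      intro i
      simp only [consD]
      rw [pow_succ]
      field_simp
    rw [tsum_congr e2, tsum_mul_right]
    simp only [consD]
    rw [pow_one]
    field_simp
    ring

lemma symm_mem (l : ℕ) {y : ℝ} (hy : y ∈ Kl l) :
    (4*(l:ℝ)+1)/(2*(l:ℝ)+1) - y ∈ Kl l := by
  obtain ⟨ε, hε, rfl⟩ := hy
  have hle : ∀ i, ε i ≤ 4*l+1 := fun i => Tl_le (hε i)
  refine ⟨fun i => 4*l+1 - ε i, ?_, ?_⟩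
  · intro i
    exact mem_Tl_of l (4*l+1 - ε i)
      (by rcases Tl_mod l (hε i) with ⟨h1,h2⟩|⟨h1,h2,h3⟩ <;> omega)
  · show (4*(l:ℝ)+1)/(2*(l:ℝ)+1) - (∑' i : ℕ, (ε i:ℝ)/(2*(l:ℝ)+2)^(i+1))
      = ∑' i : ℕ, ((4*l+1 - ε i : ℕ):ℝ)/(2*(l:ℝ)+2)^(i+1)
    have e1 : ∀ i : ℕ, ((4*l+1 - ε i : ℕ):ℝ)/(2*(l:ℝ)+2)^(i+1)
        = (4*(l:ℝ)+1)/(2*(l:ℝ)+2)^(i+1) - (ε i:ℝ)/(2*(l:ℝ)+2)^(i+1) := by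
      intro i
      rw [Nat.cast_sub (hle i)]
      push_cast
      ring
    rw [tsum_congr e1, Summable.tsum_sub (summable_geom_aux l (4*(l:ℝ)+1)) (summable_digits l ε hle),
      tsum_const_div]

lemma Kl_closed (l : ℕ) : IsClosed (Kl l) := by
  classical
  let g : Fin (4*l+2) → ℕ := fun v => if (v:ℕ) ∈ Tl l then (v:ℕ) else 0
  have hg_mem : ∀ v, g v ∈ Tl l := by
    intro v
    by_cases h : (v:ℕ) ∈ Tl l
    · simp only [g, if_pos h]; exact h
    · simp only [g, if_neg h]; exact mem_Tl_of l 0 (by omega)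
  have hg_le : ∀ v : Fin (4*l+2), g v ≤ 4*l+1 := by
    intro v
    have := v.isLt
    simp only [g]
    split <;> omega
  have key : Kl l = Set.range (fun f : ℕ → Fin (4*l+2) =>
      ∑' i : ℕ, ((g (f i) : ℕ) : ℝ)/(2*(l:ℝ)+2)^(i+1)) := by
    ext x
    constructor
    · rintro ⟨ε, hε, rfl⟩
      refine ⟨fun i => ⟨ε i, by have := Tl_le (hε i); omega⟩, ?_⟩
      apply tsum_congr
      intro i
      congr 2
      simp only [g]
      rw [if_pos (hε i)]
    · rintro ⟨f, rfl⟩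
      exact ⟨fun i => g (f i), fun i => hg_mem (f i), rfl⟩
  rw [key]
  have hcont : Continuous (fun f : ℕ → Fin (4*l+2) =>
      ∑' i : ℕ, ((g (f i) : ℕ) : ℝ)/(2*(l:ℝ)+2)^(i+1)) := by
    have hf : ∀ i : ℕ, Continuous fun (x : ℕ → Fin (4*l+2)) =>
        ((g (x i) : ℕ) : ℝ)/(2*(l:ℝ)+2)^(i+1) := by
      intro i
      have h1 : Continuous (fun v : Fin (4*l+2) => ((g v : ℕ) : ℝ)) :=
        continuous_of_discreteTopology
      exact (h1.comp (continuous_apply i)).div_const _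
    have hu : Summable (fun i : ℕ => (4*(l:ℝ)+1)/(2*(l:ℝ)+2)^(i+1)) :=
      summable_geom_aux l _
    have hfu : ∀ (n : ℕ) (x : ℕ → Fin (4*l+2)),
        ‖((g (x n) : ℕ) : ℝ)/(2*(l:ℝ)+2)^(n+1)‖ ≤ (4*(l:ℝ)+1)/(2*(l:ℝ)+2)^(n+1) := by
      intro n x
      rw [Real.norm_eq_abs, abs_of_nonneg (by positivity)]
      have h : ((g (x n) : ℕ) : ℝ) ≤ 4*(l:ℝ)+1 := by
        have h2 := (Nat.cast_le (α := ℝ)).mpr (hg_le (x n))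
        push_cast at h2
        linarith
      gcongr
    exact continuous_tsum hf hu hfu
  exact (isCompact_range hcont).isClosed

lemma comb1 (l : ℕ) {x y z c : ℝ} {d : ℕ} (hd : d ∈ Tl l) (hz : z ∈ Kl l)
    (he : |y - z| ≤ c) (hx : x = (y + (d:ℝ))/(2*(l:ℝ)+2)) :
    ∃ z' ∈ Kl l, |x - z'| ≤ c/(2*(l:ℝ)+2) := by
  have hb := hb_pos l
  refine ⟨(z + (d:ℝ))/(2*(l:ℝ)+2), prepend_mem l hd hz, ?_⟩
  have hxe : x - (z + (d:ℝ))/(2*(l:ℝ)+2) = (y - z)/(2*(l:ℝ)+2) := by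
    rw [hx]; ring
  rw [hxe, abs_div, abs_of_pos hb, div_le_div_iff₀ hb hb]
  exact mul_le_mul_of_nonneg_right he (le_of_lt hb)

lemma comb2 (l : ℕ) {x y z c : ℝ} {d : ℕ} (hd : d ∈ Tl l) (hz : z ∈ Kl l)
    (he : |y - z| ≤ c)
    (hx : x = ((4*(l:ℝ)+1)/(2*(l:ℝ)+1) - y + (d:ℝ))/(2*(l:ℝ)+2)) :
    ∃ z' ∈ Kl l, |x - z'| ≤ c/(2*(l:ℝ)+2) := by
  have hb := hb_pos l
  refine ⟨((4*(l:ℝ)+1)/(2*(l:ℝ)+1) - z + (d:ℝ))/(2*(l:ℝ)+2),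
    prepend_mem l hd (symm_mem l hz), ?_⟩
  have hxe : x - ((4*(l:ℝ)+1)/(2*(l:ℝ)+1) - z + (d:ℝ))/(2*(l:ℝ)+2)
      = (z - y)/(2*(l:ℝ)+2) := by rw [hx]; ring
  rw [hxe, abs_div, abs_of_pos hb, abs_sub_comm z y, div_le_div_iff₀ hb hb]
  exact mul_le_mul_of_nonneg_right he (le_of_lt hb)

lemma comb3 (l : ℕ) {x y z c : ℝ} {d : ℕ} (hd : d ∈ Tl l) (hz : z ∈ Kl l)
    (he : |y - z| ≤ c)
    (hx : x = (4*(l:ℝ)+1)/(2*(l:ℝ)+1) - (y + (d:ℝ))/(2*(l:ℝ)+2)) :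
    ∃ z' ∈ Kl l, |x - z'| ≤ c/(2*(l:ℝ)+2) := by
  have hb := hb_pos l
  refine ⟨(4*(l:ℝ)+1)/(2*(l:ℝ)+1) - (z + (d:ℝ))/(2*(l:ℝ)+2),
    symm_mem l (prepend_mem l hd hz), ?_⟩
  have hxe : x - ((4*(l:ℝ)+1)/(2*(l:ℝ)+1) - (z + (d:ℝ))/(2*(l:ℝ)+2))
      = (z - y)/(2*(l:ℝ)+2) := by rw [hx]; ring
  rw [hxe, abs_div, abs_of_pos hb, abs_sub_comm z y, div_le_div_iff₀ hb hb]
  exact mul_le_mul_of_nonneg_right he (le_of_lt hb)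

lemma approx (l : ℕ) : ∀ n : ℕ,
    (∀ x : ℝ, 2*(l:ℝ)/(2*(l:ℝ)+1) ≤ x → x ≤ 1 →
      ∃ z ∈ Kl l, |x - z| ≤ ((4*(l:ℝ)+1)/(2*(l:ℝ)+1))/(2*(l:ℝ)+2)^n) ∧
    (∀ s : ℝ, 0 ≤ s → s ≤ 2*(l:ℝ)/(2*(l:ℝ)+1) →
      (∃ z ∈ Kl l, |s - z| ≤ ((4*(l:ℝ)+1)/(2*(l:ℝ)+1))/(2*(l:ℝ)+2)^n) ∨
      (∃ z ∈ Kl l, |2*(l:ℝ)/(2*(l:ℝ)+1) - s - z| ≤ ((4*(l:ℝ)+1)/(2*(l:ℝ)+1))/(2*(l:ℝ)+2)^n)) := by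
  intro n
  induction n with
  | zero =>
    have h21 : (0:ℝ) < 2*(l:ℝ)+1 := h21_pos l
    have hl0 : (0:ℝ) ≤ (l:ℝ) := Nat.cast_nonneg l
    have hM1 : (1:ℝ) ≤ (4*(l:ℝ)+1)/(2*(l:ℝ)+1) := by
      rw [le_div_iff₀ h21]; linarith
    have hαM : 2*(l:ℝ)/(2*(l:ℝ)+1) ≤ (4*(l:ℝ)+1)/(2*(l:ℝ)+1) := by
      rw [div_le_div_iff₀ h21 h21]; nlinarith
    have hα0 : (0:ℝ) ≤ 2*(l:ℝ)/(2*(l:ℝ)+1) := by positivity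
    constructor
    · intro x hx1 hx2
      refine ⟨0, zero_mem l, ?_⟩
      rw [pow_zero, div_one, sub_zero, abs_of_nonneg (le_trans hα0 hx1)]
      linarith
    · intro s hs0 hs1
      left
      refine ⟨0, zero_mem l, ?_⟩
      rw [pow_zero, div_one, sub_zero, abs_of_nonneg hs0]
      linarith
  | succ n ih =>
    have h21 : (0:ℝ) < 2*(l:ℝ)+1 := h21_pos l
    have hb : (0:ℝ) < 2*(l:ℝ)+2 := hb_pos l
    have hbne : (2*(l:ℝ)+2) ≠ 0 := ne_of_gt hb
    have h21ne : (2*(l:ℝ)+1) ≠ 0 := ne_of_gt h21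
    have hl0 : (0:ℝ) ≤ (l:ℝ) := Nat.cast_nonneg l
    have hsplit : ((4*(l:ℝ)+1)/(2*(l:ℝ)+1))/(2*(l:ℝ)+2)^(n+1)
        = (((4*(l:ℝ)+1)/(2*(l:ℝ)+1))/(2*(l:ℝ)+2)^n)/(2*(l:ℝ)+2) := by
      rw [pow_succ, div_div ((4*(l:ℝ)+1)/(2*(l:ℝ)+1)) ((2*(l:ℝ)+2)^n) (2*(l:ℝ)+2)]
    have hid : (2*(l:ℝ)+2)*(2*(l:ℝ)/(2*(l:ℝ)+1)) = 2*(l:ℝ) + 2*(l:ℝ)/(2*(l:ℝ)+1) := by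
      field_simp
      ring
    constructor
    · intro x hx1 hx2
      simp only [hsplit]
      have hux : 2*(l:ℝ) + 2*(l:ℝ)/(2*(l:ℝ)+1) ≤ (2*(l:ℝ)+2)*x := by
        rw [← hid]; exact mul_le_mul_of_nonneg_left hx1 (le_of_lt hb)
      have hαle : 2*(l:ℝ)/(2*(l:ℝ)+1) ≤ 1 := by
        rw [div_le_one h21]; linarith
      have huxU : (2*(l:ℝ)+2)*x ≤ 2*(l:ℝ)+2 := by
        have h2 := mul_le_mul_of_nonneg_left hx2 (le_of_lt hb)
        linarith
      by_cases hA : (2*(l:ℝ)+2)*x ≤ 2*(l:ℝ)+1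
      · obtain ⟨z, hz, he⟩ := ih.1 ((2*(l:ℝ)+2)*x - 2*(l:ℝ)) (by linarith) (by linarith)
        refine comb1 l (d := 2*l) (mem_Tl_of l _ (by omega)) hz he ?_
        push_cast
        rw [eq_div_iff hbne]
        ring
      · push_neg at hA
        by_cases hA2 : 2*(l:ℝ)+1 + 2*(l:ℝ)/(2*(l:ℝ)+1) ≤ (2*(l:ℝ)+2)*x
        · obtain ⟨z, hz, he⟩ := ih.1 ((2*(l:ℝ)+2)*x - (2*(l:ℝ)+1)) (by linarith) (by linarith)
          refine comb1 l (d := 2*l+1) (mem_Tl_of l _ (by omega)) hz he ?_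
          push_cast
          rw [eq_div_iff hbne]
          ring
        · push_neg at hA2
          rcases ih.2 ((2*(l:ℝ)+2)*x - (2*(l:ℝ)+1)) (by linarith) (by linarith) with
            ⟨z, hz, he⟩ | ⟨z, hz, he⟩
          · refine comb1 l (d := 2*l+1) (mem_Tl_of l _ (by omega)) hz he ?_
            push_cast
            rw [eq_div_iff hbne]
            ring
          · refine comb2 l (d := 2*l) (mem_Tl_of l _ (by omega)) hz he ?_
            push_cast
            rw [eq_div_iff hbne]
            field_simp
            ring
    · intro s hs0 hs1
      simp only [hsplit]
      have hu0 : (0:ℝ) ≤ (2*(l:ℝ)+2)*s := mul_nonneg (le_of_lt hb) hs0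
      have hub : (2*(l:ℝ)+2)*s ≤ 2*(l:ℝ) + 2*(l:ℝ)/(2*(l:ℝ)+1) := by
        rw [← hid]; exact mul_le_mul_of_nonneg_left hs1 (le_of_lt hb)
      set k : ℕ := min ⌊(2*(l:ℝ)+2)*s⌋₊ (2*l) with hkdef
      have hk2l : k ≤ 2*l := min_le_right _ _
      have hkr : (k:ℝ) ≤ (2*(l:ℝ)+2)*s := by
        calc (k:ℝ) ≤ (⌊(2*(l:ℝ)+2)*s⌋₊:ℝ) := Nat.cast_le.mpr (min_le_left _ _)
        _ ≤ _ := Nat.floor_le hu0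
      by_cases hc : (2*(l:ℝ)+2)*s - (k:ℝ) ≤ 2*(l:ℝ)/(2*(l:ℝ)+1)
      · rcases Nat.mod_two_eq_zero_or_one k with hke | hko
        · -- k even
          rcases ih.2 ((2*(l:ℝ)+2)*s - (k:ℝ)) (by linarith) hc with ⟨z, hz, he⟩ | ⟨z, hz, he⟩
          · left
            refine comb1 l (d := k) (mem_Tl_of l _ (by omega)) hz he ?_
            rw [eq_div_iff hbne]
            ring
          · right
            have hcast : ((2*l - k : ℕ):ℝ) = 2*(l:ℝ) - (k:ℝ) := by
              rw [Nat.cast_sub hk2l]; push_cast; ring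
            refine comb1 l (d := 2*l - k) (mem_Tl_of l _ (by omega)) hz he ?_
            rw [hcast, eq_div_iff hbne]
            field_simp
            ring
        · -- k odd
          have hk1 : 1 ≤ k := by omega
          have hklt : k + 1 ≤ 2*l := by omega
          rcases ih.2 ((2*(l:ℝ)+2)*s - (k:ℝ)) (by linarith) hc with ⟨z, hz, he⟩ | ⟨z, hz, he⟩
          · right
            refine comb3 l (d := 2*l+2+k) (mem_Tl_of l _ (by omega)) hz he ?_
            push_cast
            field_simp
            ring
          · left
            have hcast : ((k - 1 : ℕ):ℝ) = (k:ℝ) - 1 := by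
              rw [Nat.cast_sub hk1]; push_cast; ring
            refine comb2 l (d := k - 1) (mem_Tl_of l _ (by omega)) hz he ?_
            rw [hcast, eq_div_iff hbne]
            field_simp
            ring
      · -- gap case
        push_neg at hc
        have hflt : ⌊(2*(l:ℝ)+2)*s⌋₊ < 2*l := by
          by_contra hcon
          push_neg at hcon
          have hk : k = 2*l := by rw [hkdef]; exact min_eq_right hcon
          have hkcast : (k:ℝ) = 2*(l:ℝ) := by rw [hk]; push_cast; ring
          linarith
        have hkfl : k = ⌊(2*(l:ℝ)+2)*s⌋₊ := by
          rw [hkdef]; exact min_eq_left (le_of_lt hflt)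
        have hklt2 : k + 1 ≤ 2*l := by omega
        have hult : (2*(l:ℝ)+2)*s < (k:ℝ) + 1 := by
          rw [hkfl]
          exact_mod_cast Nat.lt_floor_add_one ((2*(l:ℝ)+2)*s)
        rcases Nat.mod_two_eq_zero_or_one k with hke | hko
        · left
          obtain ⟨z, hz, he⟩ := ih.1 ((2*(l:ℝ)+2)*s - (k:ℝ)) (le_of_lt hc) (by linarith)
          refine comb1 l (d := k) (mem_Tl_of l _ (by omega)) hz he ?_
          rw [eq_div_iff hbne]
          ring
        · right
          obtain ⟨z, hz, he⟩ := ih.1 (1 + 2*(l:ℝ)/(2*(l:ℝ)+1) - ((2*(l:ℝ)+2)*s - (k:ℝ)))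
            (by linarith) (by linarith)
          have hcast : ((2*l - (k+1) : ℕ):ℝ) = 2*(l:ℝ) - (k:ℝ) - 1 := by
            rw [Nat.cast_sub hklt2]; push_cast; ring
          refine comb1 l (d := 2*l - (k+1)) (mem_Tl_of l _ (by omega)) hz he ?_
          rw [hcast, eq_div_iff hbne]
          field_simp
          ring

end Stmt6Aux

theorem stmt6 (l : ℕ) (hl : 1 ≤ l) :
    Set.Icc ((2 * l) / (2 * l + 1) : ℝ) 1 ⊆ Kl l := by
  intro x hx
  have hx1 : 2*(l:ℝ)/(2*(l:ℝ)+1) ≤ x := hx.1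
  have hx2 : x ≤ 1 := hx.2
  have hM : (0:ℝ) < (4*(l:ℝ)+1)/(2*(l:ℝ)+1) := by positivity
  have hcl := Stmt6Aux.Kl_closed l
  rw [← hcl.closure_eq]
  rw [Metric.mem_closure_iff]
  intro ε hε
  obtain ⟨n, hn⟩ := exists_pow_lt_of_lt_one (div_pos hε hM)
    (show (1:ℝ)/(2*(l:ℝ)+2) < 1 by
      rw [div_lt_one (Stmt6Aux.hb_pos l)]; exact Stmt6Aux.hb_gt1 l)
  obtain ⟨z, hz, hbd⟩ := (Stmt6Aux.approx l n).1 x hx1 hx2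
  refine ⟨z, hz, ?_⟩
  rw [Real.dist_eq]
  have h2 : ((4*(l:ℝ)+1)/(2*(l:ℝ)+1))/(2*(l:ℝ)+2)^n < ε := by
    have e1 : ((4*(l:ℝ)+1)/(2*(l:ℝ)+1))/(2*(l:ℝ)+2)^n
        = ((4*(l:ℝ)+1)/(2*(l:ℝ)+1)) * (1/(2*(l:ℝ)+2))^n := by
      rw [one_div, inv_pow]
      ring
    rw [e1]
    calc ((4*(l:ℝ)+1)/(2*(l:ℝ)+1)) * (1/(2*(l:ℝ)+2))^n
        < ((4*(l:ℝ)+1)/(2*(l:ℝ)+1)) * (ε/((4*(l:ℝ)+1)/(2*(l:ℝ)+1))) :=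
          mul_lt_mul_of_pos_left hn hM
    _ = ε := by field_simp
  linarith
end

section
/- K_l has nonempty interior; in particular the open interval ((2l)/(2l+1), 1) is contained in the interior of K_l. -/
open MeasureTheory

def s7cnt (g : ℕ → ℕ) (c : ℕ) : ℕ :=
  ((Finset.range c).filter (fun j => g j ≠ 0 ∧ Even (g j))).card

lemma s7cnt_mono (g : ℕ → ℕ) {a c : ℕ} (h : a ≤ c) : s7cnt g a ≤ s7cnt g c :=
  Finset.card_le_card (Finset.filter_subset_filter _ (Finset.range_subset_range.mpr h))

lemma s7cnt_succ (g : ℕ → ℕ) (i : ℕ) :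
    s7cnt g (i + 1) = s7cnt g i + (if g i ≠ 0 ∧ Even (g i) then 1 else 0) := by
  unfold s7cnt
  rw [Finset.range_add_one, Finset.filter_insert]
  split_ifs with h
  · rw [Finset.card_insert_of_notMem (by simp)]
  · simp

noncomputable def s7m (g : ℕ → ℕ) (i : ℕ) : ℕ :=
  haveI : Decidable (∃ q, i ≤ q ∧ g q = 0) := Classical.dec _
  if H : ∃ q, i ≤ q ∧ g q = 0 then (s7cnt g (Nat.find H) - s7cnt g i) % 2
  else s7cnt g i % 2

lemma s7m_spec (g : ℕ → ℕ) (i : ℕ) (H : ∃ q, i ≤ q ∧ g q = 0) :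
    s7m g i = (s7cnt g (Nat.find H) - s7cnt g i) % 2 := by
  unfold s7m; rw [dif_pos H]

lemma s7m_else (g : ℕ → ℕ) (i : ℕ) (H : ¬ ∃ q, i ≤ q ∧ g q = 0) :
    s7m g i = s7cnt g i % 2 := by
  unfold s7m; rw [dif_neg H]

lemma s7m_le_one (g : ℕ → ℕ) (i : ℕ) : s7m g i ≤ 1 := by
  unfold s7m; split <;> omega

lemma s7m_eq_zero (g : ℕ → ℕ) (q : ℕ) (hq : g q = 0) : s7m g q = 0 := by
  have H : ∃ r, q ≤ r ∧ g r = 0 := ⟨q, le_refl q, hq⟩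
  rw [s7m_spec g q H]
  have h1 : Nat.find H ≤ q := Nat.find_le ⟨le_refl q, hq⟩
  have h2 : q ≤ Nat.find H := (Nat.find_spec H).1
  have : Nat.find H = q := le_antisymm h1 h2
  rw [this]; omega

lemma s7m_step (g : ℕ → ℕ) (i : ℕ) (hgi : g i ≠ 0) :
    (g i % 2 = 1 → s7m g (i + 1) = s7m g i) ∧
    (g i % 2 = 0 → s7m g (i + 1) + s7m g i = 1) := by
  have hind : (if g i ≠ 0 ∧ Even (g i) then 1 else 0)
      = (if g i % 2 = 0 then 1 else 0) := by
    simp only [Nat.even_iff]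
    split_ifs <;> omega
  by_cases H : ∃ q, i ≤ q ∧ g q = 0
  · have hf := Nat.find_spec H
    have hif : i + 1 ≤ Nat.find H := by
      rcases Nat.lt_or_ge i (Nat.find H) with h | h
      · omega
      · exfalso; apply hgi
        have : Nat.find H = i := le_antisymm h hf.1
        rw [← this]; exact hf.2
    have H' : ∃ q, i + 1 ≤ q ∧ g q = 0 := ⟨Nat.find H, hif, hf.2⟩
    have hff' : Nat.find H' = Nat.find H := by
      apply le_antisymm (Nat.find_le ⟨hif, hf.2⟩)
      exact Nat.find_le ⟨le_trans (Nat.le_succ i) (Nat.find_spec H').1, (Nat.find_spec H').2⟩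
    rw [s7m_spec g i H, s7m_spec g (i + 1) H', hff']
    have hc := s7cnt_succ g i
    rw [hind] at hc
    have hm1 : s7cnt g (i + 1) ≤ s7cnt g (Nat.find H) := s7cnt_mono g hif
    constructor <;> intro hpar <;> simp [hpar] at hc <;> omega
  · have H' : ¬ ∃ q, i + 1 ≤ q ∧ g q = 0 := by
      rintro ⟨q, h1, h2⟩; exact H ⟨q, le_trans (Nat.le_succ i) h1, h2⟩
    rw [s7m_else g i H, s7m_else g (i + 1) H']
    have hc := s7cnt_succ g i
    rw [hind] at hc
    constructor <;> intro hpar <;> simp [hpar] at hc <;> omega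

lemma s7m_zero (g : ℕ → ℕ) (k : ℕ) (h1 : ∀ j < k, g j = 1) (hk : g k = 0) :
    s7m g 0 = 0 := by
  have H : ∃ q, 0 ≤ q ∧ g q = 0 := ⟨k, Nat.zero_le k, hk⟩
  rw [s7m_spec g 0 H]
  have hfk : Nat.find H ≤ k := Nat.find_le ⟨Nat.zero_le k, hk⟩
  have hzero : s7cnt g (Nat.find H) = 0 := by
    unfold s7cnt
    rw [Finset.card_eq_zero, Finset.filter_eq_empty_iff]
    intro j hj
    rw [Finset.mem_range] at hj
    rw [h1 j (lt_of_lt_of_le hj hfk)]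
    simp [Nat.even_iff]
  rw [hzero]
  omega

lemma s7digit (l g μ ν : ℕ) (hg : g ≤ 2 * l + 1) (hμ : μ ≤ 1) (hν : ν ≤ 1)
    (h0 : g = 0 → μ = 0)
    (hodd : g % 2 = 1 → ν = μ)
    (heven : g ≠ 0 → g % 2 = 0 → ν + μ = 1) :
    ∃ e : ℕ, e ∈ Tl l ∧ e + (g + ν) = (2 * l + 1) + (2 * l + 2) * μ := by
  refine ⟨2 * l + 1 + (2 * l + 2) * μ - (g + ν), ?_, ?_⟩
  · simp only [Tl, Set.mem_setOf_eq, Nat.even_iff, Nat.odd_iff]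
    interval_cases μ <;> interval_cases ν <;> omega
  · interval_cases μ <;> interval_cases ν <;> omega

lemma s7main (l : ℕ) (hl : 1 ≤ l) :
    Set.Ioo ((2 * l) / (2 * l + 1) : ℝ) 1 ⊆ Kl l := by
  intro x hx
  obtain ⟨hx1, hx2⟩ := hx
  have hl1 : (1 : ℝ) ≤ (l : ℝ) := by exact_mod_cast hl
  have h2l1 : (0 : ℝ) < 2 * (l : ℝ) + 1 := by linarith
  have hB0 : (0 : ℝ) < 2 * (l : ℝ) + 2 := by linarith
  have hB1 : (1 : ℝ) < 2 * (l : ℝ) + 2 := by linarith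
  set y : ℝ := 1 - x with hy_def
  have hy0 : 0 < y := by simp only [hy_def]; linarith
  have hyA : y < 1 / (2 * (l : ℝ) + 1) := by
    have h : (2 * (l : ℝ)) / (2 * (l : ℝ) + 1) = 1 - 1 / (2 * (l : ℝ) + 1) := by
      field_simp
      ring
    rw [hy_def]
    rw [h] at hx1
    linarith
  have hy1 : y < 1 := by
    have : 1 / (2 * (l : ℝ) + 1) ≤ 1 := by
      rw [div_le_one h2l1]; linarith
    linarith
  -- digit machinery
  set n : ℕ → ℕ := fun i => ⌊y * (2 * (l : ℝ) + 2) ^ i⌋₊ with hn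
  set g : ℕ → ℕ := fun i => n (i + 1) - (2 * l + 2) * n i with hg
  have hnlb : ∀ i, (n i : ℝ) ≤ y * (2 * (l : ℝ) + 2) ^ i := by
    intro i; rw [hn]; exact Nat.floor_le (by positivity)
  have hnub : ∀ i, y * (2 * (l : ℝ) + 2) ^ i < n i + 1 := by
    intro i; rw [hn]; exact Nat.lt_floor_add_one _
  have hn0 : n 0 = 0 := by
    rw [hn]; simp only [pow_zero, mul_one]
    exact Nat.floor_eq_zero.mpr hy1
  have hstep_lb : ∀ i, (2 * l + 2) * n i ≤ n (i + 1) := by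
    intro i
    rw [hn]
    apply Nat.le_floor
    push_cast
    have h1 := hnlb i
    calc (2 * (l : ℝ) + 2) * (n i) ≤ (2 * (l : ℝ) + 2) * (y * (2 * (l : ℝ) + 2) ^ i) := by
          exact mul_le_mul_of_nonneg_left h1 (le_of_lt hB0)
      _ = y * (2 * (l : ℝ) + 2) ^ (i + 1) := by ring
  have hstep_ub : ∀ i, n (i + 1) < (2 * l + 2) * n i + (2 * l + 2) := by
    intro i
    have hlt : y * (2 * (l : ℝ) + 2) ^ (i + 1) < ((2 * l + 2) * n i + (2 * l + 2) : ℕ) := by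
      push_cast
      have h1 := hnub i
      have hps : y * (2 * (l : ℝ) + 2) ^ (i + 1)
          = (y * (2 * (l : ℝ) + 2) ^ i) * (2 * (l : ℝ) + 2) := by ring
      nlinarith [mul_lt_mul_of_pos_right h1 hB0, hps]
    have := Nat.floor_lt (a := y * (2 * (l : ℝ) + 2) ^ (i + 1))
      (by positivity) |>.mpr hlt
    rw [hn]
    exact this
  have hgval : ∀ i, g i = n (i + 1) - (2 * l + 2) * n i := fun i => rfl
  have hgdef : ∀ i, n (i + 1) = (2 * l + 2) * n i + g i := by
    intro i; have := hstep_lb i; have := hgval i; omega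
  have hg_le : ∀ i, g i ≤ 2 * l + 1 := by
    intro i; have h1 := hstep_ub i; have h2 := hgdef i; omega
  -- all-ones identity
  have hones : ∀ N, (∀ j < N, g j = 1) → (2 * (l : ℝ) + 1) * n N = (2 * (l : ℝ) + 2) ^ N - 1 := by
    intro N
    induction N with
    | zero => intro _; simp [hn0]
    | succ N ih =>
      intro hj
      have ihh := ih (fun j hjN => hj j (Nat.lt_succ_of_lt hjN))
      have h1 : n (N + 1) = (2 * l + 2) * n N + 1 := by
        rw [hgdef N, hj N (Nat.lt_succ_self N)]
      have h2 : (n (N + 1) : ℝ) = (2 * (l : ℝ) + 2) * n N + 1 := by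
        exact_mod_cast congrArg (Nat.cast : ℕ → ℝ) h1
      rw [h2]
      rw [pow_succ]
      linear_combination (2 * (l : ℝ) + 2) * ihh
  -- existence of a non-one digit
  have hex : ∃ i, g i ≠ 1 := by
    by_contra hcon
    push_neg at hcon
    have hc : 0 < 1 / (2 * (l : ℝ) + 1) - y := by linarith
    obtain ⟨N, hN⟩ := pow_unbounded_of_one_lt
      ((1 : ℝ) / ((2 * (l : ℝ) + 1) * (1 / (2 * (l : ℝ) + 1) - y))) hB1
    have hN' : 1 < (2 * (l : ℝ) + 2) ^ N * ((2 * (l : ℝ) + 1) * (1 / (2 * (l : ℝ) + 1) - y)) := by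
      rw [div_lt_iff₀ (by positivity)] at hN
      linarith
    have h1 := hones N (fun j _ => hcon j)
    have h2 := hnlb N
    have hKs : (2 * (l : ℝ) + 1) * (1 / (2 * (l : ℝ) + 1)) = 1 := by
      field_simp
    have e1 := mul_le_mul_of_nonneg_left h2 (le_of_lt h2l1)
    have hKsP : (2 * (l : ℝ) + 2) ^ N * ((2 * (l : ℝ) + 1) * (1 / (2 * (l : ℝ) + 1) - y))
        = (2 * (l : ℝ) + 2) ^ N - ((2 * (l : ℝ) + 1) * y) * (2 * (l : ℝ) + 2) ^ N := by
      field_simp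
    nlinarith [e1, hKsP, hN', h1]
  set k := Nat.find hex with hk
  have hk1 : ∀ j < k, g j = 1 := by
    intro j hj
    have := Nat.find_min hex hj
    simpa using this
  have hkspec : g k ≠ 1 := Nat.find_spec hex
  have hk0 : g k = 0 := by
    by_contra hne
    have hge : 2 ≤ g k := by omega
    have hidk := hones k hk1
    have h2 := hnlb (k + 1)
    have h3 : (n (k + 1) : ℝ) = (2 * (l : ℝ) + 2) * n k + g k := by
      have := hgdef k; exact_mod_cast congrArg (Nat.cast : ℕ → ℝ) this
    have hgk : (2 : ℝ) ≤ (g k : ℝ) := by exact_mod_cast hge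
    have hy2 : (2 * (l : ℝ) + 1) * y < 1 := by
      have := mul_lt_mul_of_pos_left hyA h2l1
      rw [mul_one_div, div_self (ne_of_gt h2l1)] at this
      exact this
    have e1 := mul_le_mul_of_nonneg_left h2 (le_of_lt h2l1)
    have e4 := mul_lt_mul_of_pos_right hy2 (pow_pos hB0 (k + 1))
    have e5 := mul_le_mul_of_nonneg_left hgk (le_of_lt h2l1)
    have e6 : (2 * (l : ℝ) + 2) ^ (k + 1) = (2 * (l : ℝ) + 2) ^ k * (2 * (l : ℝ) + 2) :=
      pow_succ _ _
    have e7 : (2 * (l : ℝ) + 1) * (n (k + 1) : ℝ)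
        = (2 * (l : ℝ) + 2) * ((2 * (l : ℝ) + 1) * (n k : ℝ))
          + (2 * (l : ℝ) + 1) * (g k : ℝ) := by
      rw [h3]; ring
    nlinarith [e1, e4, e5, e6, e7, hidk, hl1]
  -- borrow sequence facts
  have hm_le : ∀ i, s7m g i ≤ 1 := s7m_le_one g
  have hm0 : s7m g 0 = 0 := s7m_zero g k hk1 hk0
  have hmbig : ∀ i, g i = 0 → s7m g i = 0 := fun i => s7m_eq_zero g i
  have hodd : ∀ i, g i % 2 = 1 → s7m g (i + 1) = s7m g i := by
    intro i hp
    exact (s7m_step g i (by omega)).1 hp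
  have heven : ∀ i, g i ≠ 0 → g i % 2 = 0 → s7m g (i + 1) + s7m g i = 1 := by
    intro i h1 h2
    exact (s7m_step g i h1).2 h2
  -- choose digits
  choose ε hεT hεid using fun i =>
    s7digit l (g i) (s7m g i) (s7m g (i + 1)) (hg_le i) (hm_le i) (hm_le (i + 1))
      (hmbig i) (hodd i) (heven i)
  -- cast identities
  have hScast : ∀ i, (ε i : ℝ) = (2 * (l : ℝ) + 1) + (2 * (l : ℝ) + 2) * (s7m g i)
      - (g i) - (s7m g (i + 1)) := by
    intro i
    have := hεid i
    have hc : ((ε i : ℝ)) + ((g i : ℝ) + (s7m g (i + 1) : ℝ))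
        = (2 * (l : ℝ) + 1) + (2 * (l : ℝ) + 2) * (s7m g i : ℝ) := by
      exact_mod_cast congrArg (Nat.cast : ℕ → ℝ) this
    linarith
  have hcast_n : ∀ i, (n (i + 1) : ℝ) = (2 * (l : ℝ) + 2) * n i + g i := by
    intro i; exact_mod_cast congrArg (Nat.cast : ℕ → ℝ) (hgdef i)
  -- partial sums
  have hpartial : ∀ N, ∑ i ∈ Finset.range N, (ε i : ℝ) / (2 * (l : ℝ) + 2) ^ (i + 1)
      = 1 - (1 + (n N : ℝ) + (s7m g N : ℝ)) / (2 * (l : ℝ) + 2) ^ N := by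
    intro N
    induction N with
    | zero => simp [hn0, hm0]
    | succ N ih =>
      rw [Finset.sum_range_succ, ih]
      have hBN : ((2 * (l : ℝ) + 2)) ^ N ≠ 0 := by positivity
      have hBN1 : ((2 * (l : ℝ) + 2)) ^ (N + 1) ≠ 0 := by positivity
      have key : (ε N : ℝ) / (2 * (l : ℝ) + 2) ^ (N + 1)
          = (1 + (n N : ℝ) + (s7m g N : ℝ)) / (2 * (l : ℝ) + 2) ^ N
            - (1 + (n (N + 1) : ℝ) + (s7m g (N + 1) : ℝ)) / (2 * (l : ℝ) + 2) ^ (N + 1) := by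
        rw [hScast N, hcast_n N, pow_succ]
        field_simp
        ring
      rw [key]
      ring
  -- summability
  have hεb : ∀ i, (ε i : ℝ) ≤ 4 * (l : ℝ) + 3 := by
    intro i
    have h1 := hεid i
    have h2 := hm_le i
    have h3 : (2 * l + 2) * s7m g i ≤ (2 * l + 2) * 1 := Nat.mul_le_mul_left _ (hm_le i)
    have : ε i ≤ 4 * l + 3 := by omega
    exact_mod_cast Nat.cast_le.mpr this
  have hsummable : Summable (fun i : ℕ => (ε i : ℝ) / (2 * (l : ℝ) + 2) ^ (i + 1)) := by
    have hgeo : Summable (fun i : ℕ => (4 * (l : ℝ) + 3) * (1 / (2 * (l : ℝ) + 2)) ^ i) :=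
      (summable_geometric_of_lt_one (by positivity)
        (by rw [div_lt_one hB0]; linarith)).mul_left _
    apply Summable.of_nonneg_of_le (fun i => by positivity) (fun i => ?_) hgeo
    have hrw : (1 / (2 * (l : ℝ) + 2)) ^ i = 1 / (2 * (l : ℝ) + 2) ^ i := by
      rw [one_div, one_div, inv_pow]
    rw [hrw, mul_one_div, div_le_div_iff₀ (by positivity) (by positivity)]
    have h1 := hεb i
    have h2 : (0 : ℝ) ≤ (2 * (l : ℝ) + 2) ^ i := by positivity
    calc (ε i : ℝ) * (2 * (l : ℝ) + 2) ^ i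
        ≤ (4 * (l : ℝ) + 3) * (2 * (l : ℝ) + 2) ^ i := mul_le_mul_of_nonneg_right h1 h2
      _ ≤ (4 * (l : ℝ) + 3) * (2 * (l : ℝ) + 2) ^ (i + 1) := by
          have h3 : (2 * (l : ℝ) + 2) ^ i ≤ (2 * (l : ℝ) + 2) ^ (i + 1) := by
            have := pow_le_pow_right₀ (le_of_lt hB1) (Nat.le_succ i)
            exact this
          apply mul_le_mul_of_nonneg_left h3 (by positivity)
  -- tendsto
  have hx_eq : x = 1 - y := by rw [hy_def]; ring
  have hten : Filter.Tendsto
      (fun N => ∑ i ∈ Finset.range N, (ε i : ℝ) / (2 * (l : ℝ) + 2) ^ (i + 1))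
      Filter.atTop (nhds x) := by
    have hrat : Filter.Tendsto
        (fun N : ℕ => (1 + (n N : ℝ) + (s7m g N : ℝ)) / (2 * (l : ℝ) + 2) ^ N)
        Filter.atTop (nhds y) := by
      have hlo : ∀ N : ℕ, y ≤ (1 + (n N : ℝ) + (s7m g N : ℝ)) / (2 * (l : ℝ) + 2) ^ N := by
        intro N
        rw [le_div_iff₀ (by positivity)]
        have h1 := hnub N
        have h2 : (0 : ℝ) ≤ (s7m g N : ℝ) := by positivity
        linarith
      have hup : ∀ N : ℕ, (1 + (n N : ℝ) + (s7m g N : ℝ)) / (2 * (l : ℝ) + 2) ^ N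
          ≤ y + 2 / (2 * (l : ℝ) + 2) ^ N := by
        intro N
        rw [div_le_iff₀ (by positivity)]
        have h1 := hnlb N
        have hmR : (s7m g N : ℝ) ≤ 1 := by exact_mod_cast hm_le N
        have hexp : (y + 2 / (2 * (l : ℝ) + 2) ^ N) * (2 * (l : ℝ) + 2) ^ N
            = y * (2 * (l : ℝ) + 2) ^ N + 2 := by
          field_simp
        rw [hexp]
        linarith
      have h3 : Filter.Tendsto (fun N : ℕ => (2 * (l : ℝ) + 2) ^ N) Filter.atTop Filter.atTop :=
        tendsto_pow_atTop_atTop_of_one_lt hB1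
      have h4 : Filter.Tendsto (fun N : ℕ => 2 / (2 * (l : ℝ) + 2) ^ N) Filter.atTop (nhds 0) :=
        Filter.Tendsto.div_atTop tendsto_const_nhds h3
      have h5 : Filter.Tendsto (fun N : ℕ => y + 2 / (2 * (l : ℝ) + 2) ^ N)
          Filter.atTop (nhds y) := by
        have h6 : Filter.Tendsto (fun N : ℕ => y + 2 / (2 * (l : ℝ) + 2) ^ N)
            Filter.atTop (nhds (y + 0)) := Filter.Tendsto.const_add y h4
        rw [add_zero] at h6
        exact h6
      exact tendsto_of_tendsto_of_tendsto_of_le_of_le tendsto_const_nhds h5 hlo hup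
    have hfun : (fun N => ∑ i ∈ Finset.range N, (ε i : ℝ) / (2 * (l : ℝ) + 2) ^ (i + 1))
        = fun N => 1 - (1 + (n N : ℝ) + (s7m g N : ℝ)) / (2 * (l : ℝ) + 2) ^ N :=
      funext hpartial
    rw [hfun, hx_eq]
    exact tendsto_const_nhds.sub hrat
  have hHasSum := hsummable.hasSum.tendsto_sum_nat
  have htsum : ∑' i, (ε i : ℝ) / (2 * (l : ℝ) + 2) ^ (i + 1) = x :=
    tendsto_nhds_unique hHasSum hten
  exact ⟨ε, hεT, htsum.symm⟩

theorem stmt7 (l : ℕ) (hl : 1 ≤ l) :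
    (interior (Kl l)).Nonempty ∧
    Set.Ioo ((2 * l) / (2 * l + 1) : ℝ) 1 ⊆ interior (Kl l) := by
  have key := s7main l hl
  have hsub : Set.Ioo ((2 * l) / (2 * l + 1) : ℝ) 1 ⊆ interior (Kl l) :=
    interior_maximal key isOpen_Ioo
  have hA1 : ((2 * l : ℝ)) / (2 * l + 1) < 1 := by
    have h2l1 : (0 : ℝ) < 2 * (l : ℝ) + 1 := by positivity
    rw [div_lt_one h2l1]
    linarith
  exact ⟨(Set.nonempty_Ioo.mpr hA1).mono hsub, hsub⟩
end

section
/- K_l coincides with the set of subsums of the multigeometric series with blocks (2l+1, 2, 2, ..., 2) (one term (2l+1) followed by l terms equal to 2, scaled by (2l+2)^{-i} at stage i): K_l = { ∑_{n=1}^∞ δ_n z_n : (δ_n) ∈ {0,1}^ℕ }, where z_{(i−1)(l+1)+1} = (2l+1)/(2l+2)^i and z_{(i−1)(l+1)+1+j} = 2/(2l+2)^i for 1 ≤ j ≤ l, for each i ≥ 1. -/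
open MeasureTheory

lemma blocksum (l : ℕ) (z : ℕ → ℝ)
    (hz : ∀ i : ℕ, 1 ≤ i →
      z ((i - 1) * (l + 1) + 1) = (2 * l + 1) / (2 * l + 2) ^ i ∧
      ∀ j : ℕ, 1 ≤ j → j ≤ l →
        z ((i - 1) * (l + 1) + 1 + j) = 2 / (2 * l + 2) ^ i)
    (δ : ℕ → ℕ) (hδ : ∀ n, δ n ≤ 1) :
    ∑' n : ℕ, (δ (n + 1) : ℝ) * z (n + 1)
      = ∑' i : ℕ, (((δ (i * (l + 1) + 1) * (2 * l + 1)
          + 2 * ∑ r ∈ Finset.range l, δ (i * (l + 1) + 2 + r) : ℕ)) : ℝ)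
          / (2 * l + 2) ^ (i + 1) := by
  set b : ℝ := 2 * (l : ℝ) + 2 with hb
  have hb1 : (1 : ℝ) < b := by
    have : (0:ℝ) ≤ (l:ℝ) := Nat.cast_nonneg l
    simp only [hb]; linarith
  have hbpos : (0 : ℝ) < b := lt_trans one_pos hb1
  set f : ℕ → ℝ := fun n => (δ (n + 1) : ℝ) * z (n + 1) with hf
  set E : ℕ → ℕ := fun i => δ (i * (l + 1) + 1) * (2 * l + 1)
      + 2 * ∑ r ∈ Finset.range l, δ (i * (l + 1) + 2 + r) with hE
  have hz1 : ∀ i : ℕ, z (i * (l + 1) + 1) = (2 * (l:ℝ) + 1) / b ^ (i + 1) := by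
    intro i
    have h := (hz (i + 1) (by omega)).1
    simpa using h
  have hz2 : ∀ i r : ℕ, r < l → z (i * (l + 1) + r + 2) = 2 / b ^ (i + 1) := by
    intro i r hr
    have h := (hz (i + 1) (by omega)).2 (r + 1) (by omega) (by omega)
    simp only [Nat.add_sub_cancel] at h
    have e : i * (l + 1) + 1 + (r + 1) = i * (l + 1) + r + 2 := by omega
    rw [e] at h
    simpa using h
  have hblock : ∀ i, ∑ r ∈ Finset.range (l + 1), f (i * (l + 1) + r)
      = (E i : ℝ) / b ^ (i + 1) := by
    intro i
    rw [Finset.sum_range_succ']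
    have h0 : f (i * (l + 1) + 0) = (δ (i * (l + 1) + 1) : ℝ) * (2 * (l:ℝ) + 1) / b ^ (i + 1) := by
      simp only [hf, add_zero]
      rw [hz1 i]; ring
    have h1 : ∀ r ∈ Finset.range l, f (i * (l + 1) + (r + 1))
        = (δ (i * (l + 1) + 2 + r) : ℝ) * 2 / b ^ (i + 1) := by
      intro r hr
      simp only [hf]
      have e1 : i * (l + 1) + (r + 1) + 1 = i * (l + 1) + r + 2 := by omega
      rw [e1, hz2 i r (Finset.mem_range.mp hr)]
      have e2 : i * (l + 1) + r + 2 = i * (l + 1) + 2 + r := by omega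
      rw [e2]; ring
    rw [Finset.sum_congr rfl h1, h0]
    simp only [hE]
    push_cast
    rw [← Finset.sum_div, ← add_div]
    congr 1
    rw [← Finset.sum_mul]
    ring
  have hEle : ∀ i, (E i : ℝ) ≤ 4 * (l:ℝ) + 1 := by
    intro i
    have h1 : E i ≤ 4 * l + 1 := by
      have hs : ∑ r ∈ Finset.range l, δ (i * (l + 1) + 2 + r) ≤ l := by
        calc ∑ r ∈ Finset.range l, δ (i * (l + 1) + 2 + r)
            ≤ ∑ _r ∈ Finset.range l, 1 := Finset.sum_le_sum (fun r _ => hδ _)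
          _ = l := by simp
      have := hδ (i * (l + 1) + 1)
      simp only [hE]
      nlinarith [this, hs]
    calc (E i : ℝ) ≤ ((4 * l + 1 : ℕ) : ℝ) := by exact_mod_cast h1
      _ = 4 * (l:ℝ) + 1 := by push_cast; ring
  have hEnn : ∀ i, (0:ℝ) ≤ (E i : ℝ) / b ^ (i + 1) := by
    intro i; positivity
  have hsumh : Summable (fun i : ℕ => (E i : ℝ) / b ^ (i + 1)) := by
    have hgeo : Summable (fun i : ℕ => (4 * (l:ℝ) + 1) * (1 / b) ^ i) :=
      (summable_geometric_of_lt_one (by positivity) (by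
        rw [div_lt_one hbpos]; exact hb1)).mul_left _
    apply Summable.of_nonneg_of_le hEnn _ hgeo
    intro i
    have h1 : (4 * (l:ℝ) + 1) * (1 / b) ^ i = (4 * (l:ℝ) + 1) / b ^ i := by
      rw [one_div, inv_pow, div_eq_mul_inv]
    rw [h1]
    gcongr
    · exact hEle i
    · exact le_of_lt hb1
    · omega
  have hznn : ∀ n : ℕ, 0 ≤ z (n + 1) := by
    intro n
    obtain ⟨i, r, hrlt, rfl⟩ : ∃ i r, r < l + 1 ∧ n = i * (l + 1) + r :=
      ⟨n / (l + 1), n % (l + 1), Nat.mod_lt _ (by omega),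
        by rw [Nat.mul_comm]; exact (Nat.div_add_mod n (l + 1)).symm⟩
    by_cases h0 : r = 0
    · have e : i * (l + 1) + r + 1 = i * (l + 1) + 1 := by omega
      rw [e, hz1 i]; positivity
    · have e : i * (l + 1) + r + 1 = i * (l + 1) + (r - 1) + 2 := by omega
      rw [e, hz2 i (r - 1) (by omega)]; positivity
  have hfnn : ∀ n, 0 ≤ f n := by
    intro n
    exact mul_nonneg (Nat.cast_nonneg _) (hznn n)
  set g : ℕ × Fin (l + 1) → ℝ := fun p => f (p.1 * (l + 1) + (p.2 : ℕ)) with hg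
  have hgnn : 0 ≤ g := fun p => hfnn _
  have hrow : ∀ i : ℕ, ∑' r : Fin (l + 1), g (i, r) = (E i : ℝ) / b ^ (i + 1) := by
    intro i
    rw [tsum_fintype]
    rw [show (∑ r : Fin (l+1), g (i, r)) = ∑ r : Fin (l+1), f (i * (l+1) + (r:ℕ)) from rfl]
    rw [Fin.sum_univ_eq_sum_range (fun r => f (i * (l + 1) + r)) (l + 1)]
    exact hblock i
  have hgsum : Summable g := by
    refine (summable_prod_of_nonneg hgnn).2 ⟨fun i => Summable.of_finite, ?_⟩
    exact (summable_congr hrow).mpr hsumh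
  haveI : NeZero (l + 1) := ⟨by omega⟩
  have hcomp : ∀ p : ℕ × Fin (l + 1), f ((Nat.divModEquiv (l + 1)).symm p) = g p := by
    intro p; rfl
  have hfsum : Summable f := by
    have := (Equiv.summable_iff (Nat.divModEquiv (l + 1)).symm (f := f)).mp
    apply this
    exact (summable_congr hcomp).mpr hgsum
  calc ∑' n : ℕ, f n
      = ∑' p : ℕ × Fin (l + 1), f ((Nat.divModEquiv (l + 1)).symm p) :=
        (Equiv.tsum_eq (Nat.divModEquiv (l + 1)).symm f).symm
    _ = ∑' p : ℕ × Fin (l + 1), g p := tsum_congr hcomp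
    _ = ∑' i : ℕ, ∑' r : Fin (l + 1), g (i, r) := Summable.tsum_prod hgsum
    _ = ∑' i : ℕ, (E i : ℝ) / b ^ (i + 1) := tsum_congr hrow

def mval (l e : ℕ) : ℕ := if e ≤ 2 * l then e / 2 else (e - (2 * l + 1)) / 2

def dseq (l : ℕ) (ε : ℕ → ℕ) (n : ℕ) : ℕ :=
  if n = 0 then 0 else
    if (n - 1) % (l + 1) = 0 then ε ((n - 1) / (l + 1)) % 2
    else if (n - 1) % (l + 1) ≤ mval l (ε ((n - 1) / (l + 1))) then 1 else 0

lemma dseq_le (l : ℕ) (ε : ℕ → ℕ) : ∀ n, dseq l ε n ≤ 1 := by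
  intro n
  simp only [dseq]
  split_ifs <;> omega

lemma count_sum (l m : ℕ) (h : m ≤ l) :
    ∑ r ∈ Finset.range l, (if r + 1 ≤ m then 1 else 0) = m := by
  calc ∑ r ∈ Finset.range l, (if r + 1 ≤ m then (1:ℕ) else 0)
      = ∑ r ∈ Finset.range l, (if r < m then 1 else 0) := by
        refine Finset.sum_congr rfl fun r _ => ?_
        simp only [Nat.lt_iff_add_one_le]
    _ = ((Finset.range l).filter (fun r => r < m)).card := (Finset.card_filter _ _).symm
    _ = (Finset.range m).card := by
        congr 1
        ext a
        simp only [Finset.mem_filter, Finset.mem_range]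
        omega
    _ = m := by simp

lemma dseq_E (l : ℕ) (hl : 1 ≤ l) (ε : ℕ → ℕ) (hε : ∀ i, ε i ∈ Tl l) (i : ℕ) :
    dseq l ε (i * (l + 1) + 1) * (2 * l + 1)
      + 2 * ∑ r ∈ Finset.range l, dseq l ε (i * (l + 1) + 2 + r) = ε i := by
  have hfirst : dseq l ε (i * (l + 1) + 1) = ε i % 2 := by
    simp only [dseq]
    rw [if_neg (by omega), Nat.add_sub_cancel,
      if_pos (Nat.mul_mod_left i (l + 1)), Nat.mul_div_cancel _ (by omega)]
  have hrest : ∀ r, r < l → dseq l ε (i * (l + 1) + 2 + r)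
      = if r + 1 ≤ mval l (ε i) then 1 else 0 := by
    intro r hr
    simp only [dseq]
    rw [if_neg (by omega)]
    have e : i * (l + 1) + 2 + r - 1 = (1 + r) + i * (l + 1) := by omega
    rw [e, Nat.add_mul_mod_self_right, Nat.mod_eq_of_lt (by omega),
        Nat.add_mul_div_right _ _ (by omega : 0 < l + 1),
        Nat.div_eq_of_lt (by omega)]
    rw [if_neg (by omega)]
    simp [Nat.add_comm]
  have key : (ε i % 2) * (2 * l + 1) + 2 * mval l (ε i) = ε i ∧ mval l (ε i) ≤ l := by
    rcases hε i with ⟨he, hle⟩ | ⟨ho, h1, h2⟩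
    · rw [Nat.even_iff] at he
      have hm : mval l (ε i) = ε i / 2 := if_pos hle
      rw [hm, he]
      omega
    · rw [Nat.odd_iff] at ho
      have hm : mval l (ε i) = (ε i - (2 * l + 1)) / 2 := if_neg (by omega)
      rw [hm, ho]
      omega
  rw [hfirst, Finset.sum_congr rfl (fun r hr => hrest r (Finset.mem_range.mp hr)),
      count_sum l (mval l (ε i)) key.2]
  exact key.1

theorem stmt8 (l : ℕ) (hl : 1 ≤ l) (z : ℕ → ℝ)
    (hz : ∀ i : ℕ, 1 ≤ i →
      z ((i - 1) * (l + 1) + 1) = (2 * l + 1) / (2 * l + 2) ^ i ∧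
      ∀ j : ℕ, 1 ≤ j → j ≤ l →
        z ((i - 1) * (l + 1) + 1 + j) = 2 / (2 * l + 2) ^ i) :
    Kl l = {x : ℝ | ∃ δ : ℕ → ℕ, (∀ n, δ n ≤ 1) ∧
      x = ∑' n : ℕ, (δ (n + 1) : ℝ) * z (n + 1)} := by
  ext x
  simp only [Kl, Set.mem_setOf_eq]
  constructor
  · rintro ⟨ε, hε, rfl⟩
    refine ⟨dseq l ε, dseq_le l ε, ?_⟩
    rw [blocksum l z hz (dseq l ε) (dseq_le l ε)]
    exact tsum_congr fun i => by rw [dseq_E l hl ε hε i]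
  · rintro ⟨δ, hδ, rfl⟩
    refine ⟨fun i => δ (i * (l + 1) + 1) * (2 * l + 1)
      + 2 * ∑ r ∈ Finset.range l, δ (i * (l + 1) + 2 + r), fun i => ?_, ?_⟩
    · have h1 := hδ (i * (l + 1) + 1)
      have hs : ∑ r ∈ Finset.range l, δ (i * (l + 1) + 2 + r) ≤ l := by
        calc ∑ r ∈ Finset.range l, δ (i * (l + 1) + 2 + r)
            ≤ ∑ _r ∈ Finset.range l, 1 := Finset.sum_le_sum (fun r _ => hδ _)
          _ = l := by simp
      simp only [Tl, Set.mem_setOf_eq, Nat.even_iff, Nat.odd_iff]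
      rcases Nat.le_one_iff_eq_zero_or_eq_one.mp h1 with h | h <;> rw [h] <;> omega
    · exact blocksum l z hz δ hδ
end

section
/- The Guthrie–Nymann Cantorval K_1 = { ∑_{n=1}^∞ ε_n/4^n : (ε_n) ∈ {0,2,3,5}^ℕ } has Lebesgue measure 1. -/
open MeasureTheory

def GN : Set ℝ :=
  {x | ∃ ε : ℕ → ℕ, (∀ n, ε n ∈ ({0, 2, 3, 5} : Set ℕ)) ∧
    x = ∑' n : ℕ, (ε n : ℝ) / 4 ^ (n + 1)}

namespace GNAux

open Metric

lemma summable5 : Summable (fun n : ℕ => (5:ℝ)/4^(n+1)) := by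
  have h : Summable (fun n : ℕ => (5/4:ℝ) * (1/4)^n) :=
    (summable_geometric_of_lt_one (by norm_num) (by norm_num)).mul_left _
  convert h using 2 with n; rw [one_div, inv_pow]; ring

lemma tsum5 : ∑' n : ℕ, (5:ℝ)/4^(n+1) = 5/3 := by
  have h : ∑' n : ℕ, (5/4:ℝ) * (1/4)^n = (5/4) * (1-(1/4))⁻¹ := by
    rw [tsum_mul_left, tsum_geometric_of_lt_one (by norm_num) (by norm_num)]
  rw [show (fun n : ℕ => (5:ℝ)/4^(n+1)) = (fun n : ℕ => (5/4:ℝ) * (1/4)^n) by funext n; rw [one_div, inv_pow]; ring]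
  rw [h]; norm_num

lemma dig_le {ε : ℕ → ℕ} (hε : ∀ n, ε n ∈ ({0, 2, 3, 5} : Set ℕ)) (n : ℕ) : ε n ≤ 5 := by
  rcases hε n with h|h|h|h <;> simp_all

lemma summable_eps {ε : ℕ → ℕ} (hε : ∀ n, ε n ≤ 5) :
    Summable (fun n : ℕ => (ε n : ℝ)/4^(n+1)) := by
  apply Summable.of_nonneg_of_le (fun n => by positivity) (fun n => ?_) summable5
  apply div_le_div_of_nonneg_right ?_ (by positivity)
  · exact_mod_cast hε n

lemma GN_subset : GN ⊆ Set.Icc 0 (5/3) := by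
  rintro x ⟨ε, hε, rfl⟩
  have hs := summable_eps (dig_le hε)
  constructor
  · exact tsum_nonneg (fun n => by positivity)
  · rw [← tsum5]
    apply Summable.tsum_le_tsum (fun n => ?_) hs summable5
    apply div_le_div_of_nonneg_right ?_ (by positivity)
    exact_mod_cast dig_le hε n

lemma zero_mem : (0:ℝ) ∈ GN := by
  refine ⟨fun _ => 0, fun n => by simp, ?_⟩
  simp

lemma mem_GN {ε : ℕ → ℕ} (hε : ∀ n, ε n ∈ ({0, 2, 3, 5} : Set ℕ)) :
    (∑' n : ℕ, (ε n : ℝ) / 4 ^ (n + 1)) ∈ GN := ⟨ε, hε, rfl⟩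

lemma prepend {x : ℝ} (hx : x ∈ GN) {d : ℕ} (hd : d ∈ ({0, 2, 3, 5} : Set ℕ)) :
    ((d:ℝ) + x)/4 ∈ GN := by
  obtain ⟨ε, hε, rfl⟩ := hx
  set ε' : ℕ → ℕ := fun n => match n with | 0 => d | (k+1) => ε k with hε'
  have hv : ∀ n, ε' n ∈ ({0, 2, 3, 5} : Set ℕ) := by
    intro n; match n with
    | 0 => exact hd
    | (k+1) => exact hε k
  have hs : Summable (fun n : ℕ => (ε' n : ℝ)/4^(n+1)) := summable_eps (dig_le hv)
  have := mem_GN hv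
  convert this using 1
  rw [Summable.tsum_eq_zero_add hs]
  have h1 : ∑' (k : ℕ), (ε' (k+1) : ℝ)/4^(k+1+1) = (1/4) * ∑' (k : ℕ), (ε k : ℝ)/4^(k+1) := by
    rw [← tsum_mul_left]
    congr 1; funext k
    show (ε k : ℝ)/4^(k+2) = _
    ring
  rw [h1]
  show ((d:ℝ) + _)/4 = (d:ℝ)/4^(0+1) + _
  ring

lemma symm_mem {x : ℝ} (hx : x ∈ GN) : 5/3 - x ∈ GN := by
  obtain ⟨ε, hε, rfl⟩ := hx
  have hle := dig_le hε
  set ε' : ℕ → ℕ := fun n => 5 - ε n with hε'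
  have hv : ∀ n, ε' n ∈ ({0, 2, 3, 5} : Set ℕ) := by
    intro n
    have : ε n = 0 ∨ ε n = 2 ∨ ε n = 3 ∨ ε n = 5 := by
      rcases hε n with h|h|h|h <;> simp_all
    simp only [hε', Set.mem_insert_iff, Set.mem_singleton_iff]
    omega
  have := mem_GN hv
  convert this using 1
  have hcast : ∀ n, ((ε' n : ℕ):ℝ) = 5 - (ε n : ℝ) := by
    intro n; simp only [hε']
    push_cast [Nat.cast_sub (hle n)]; ring
  have h1 : (fun n => (ε' n : ℝ)/4^(n+1)) = fun n => (5:ℝ)/4^(n+1) - (ε n : ℝ)/4^(n+1) := by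
    funext n; rw [hcast n]; ring
  rw [h1, Summable.tsum_sub summable5 (summable_eps hle), tsum5]


noncomputable def dig : Fin 4 → ℕ := ![0,2,3,5]

lemma dig_le5 (i : Fin 4) : dig i ≤ 5 := by fin_cases i <;> simp [dig]

lemma dig_mem (i : Fin 4) : dig i ∈ ({0, 2, 3, 5} : Set ℕ) := by
  fin_cases i <;> simp [dig, Set.mem_insert_iff]

lemma isCompact_GN : IsCompact GN := by
  have hrange : GN = Set.range (fun a : ℕ → Fin 4 => ∑' n : ℕ, (dig (a n) : ℝ)/4^(n+1)) := by
    ext x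
    constructor
    · rintro ⟨ε, hε, rfl⟩
      refine ⟨fun n => if ε n = 0 then 0 else if ε n = 2 then 1 else if ε n = 3 then 2 else 3, ?_⟩
      show (∑' n : ℕ, ((dig _ : ℕ) : ℝ)/4^(n+1)) = _
      congr 1; funext n
      rcases hε n with h|h|h|h <;> simp_all [dig] <;> rfl
    · rintro ⟨a, rfl⟩
      exact ⟨fun n => dig (a n), fun n => dig_mem (a n), rfl⟩
  rw [hrange]
  apply isCompact_range
  apply continuous_tsum (u := fun n : ℕ => (5:ℝ)/4^(n+1)) ?_ summable5 ?_
  · intro i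
    exact (continuous_of_discreteTopology (α := Fin 4)
      (f := fun j => (dig j : ℝ)/4^(i+1))).comp (continuous_apply i)
  · intro n a
    rw [Real.norm_eq_abs, abs_div, abs_of_nonneg (by positivity : (0:ℝ) ≤ (4:ℝ)^(n+1))]
    apply div_le_div_of_nonneg_right ?_ (by positivity)
    rw [abs_of_nonneg (by positivity)]
    exact_mod_cast dig_le5 (a n)

lemma isClosed_GN : IsClosed GN := isCompact_GN.isClosed


def S : ℕ → Finset ℤ
  | 0 => {0}
  | (n+1) => (S n).biUnion (fun s => {4*s, 4*s+2, 4*s+3, 4*s+5})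

lemma S_card (n : ℕ) : (S n).card = 4^n := by
  induction n with
  | zero => simp [S]
  | succ n ih =>
    have hc4 : ∀ s ∈ S n, ({4*s, 4*s+2, 4*s+3, 4*s+5} : Finset ℤ).card = 4 := by
      intro s _
      rw [Finset.card_insert_of_notMem (by simp only [Finset.mem_insert, Finset.mem_singleton]; omega),
        Finset.card_insert_of_notMem (by simp only [Finset.mem_insert, Finset.mem_singleton]; omega),
        Finset.card_insert_of_notMem (by simp only [Finset.mem_insert, Finset.mem_singleton]; omega), Finset.card_singleton]
    have hdisj : ∀ s ∈ S n, ∀ s' ∈ S n, s ≠ s' →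
        Disjoint ({4*s, 4*s+2, 4*s+3, 4*s+5} : Finset ℤ) {4*s', 4*s'+2, 4*s'+3, 4*s'+5} := by
      intro s _ s' _ hne
      rw [Finset.disjoint_left]
      intro x hx hx'
      simp only [Finset.mem_insert, Finset.mem_singleton] at hx hx'
      omega
    rw [show S (n+1) = (S n).biUnion (fun s => {4*s, 4*s+2, 4*s+3, 4*s+5}) from rfl,
      Finset.card_biUnion hdisj, Finset.sum_congr rfl hc4, Finset.sum_const, ih,
      smul_eq_mul]
    ring

def eR (n : ℕ) : ℕ := ((S n).filter (fun s => s+1 ∉ S n)).card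
def lR (n : ℕ) : ℕ := ((S n).filter (fun s => s-1 ∉ S n)).card

lemma mem_S_succ {n : ℕ} {x : ℤ} :
    x ∈ S (n+1) ↔ ∃ s ∈ S n, x = 4*s ∨ x = 4*s+2 ∨ x = 4*s+3 ∨ x = 4*s+5 := by
  rw [show S (n+1) = (S n).biUnion (fun s => {4*s, 4*s+2, 4*s+3, 4*s+5}) from rfl]
  simp [Finset.mem_biUnion]

lemma el_bound (n : ℕ) : eR n ≤ 3^n ∧ lR n ≤ 3^n := by
  induction n with
  | zero =>
    constructor <;> · simp [eR, lR, S, Finset.filter_singleton]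
  | succ n ih =>
    obtain ⟨he, hl⟩ := ih
    have key : ∀ (f : ℤ → ℤ) (P : ℤ → Prop) [DecidablePred P],
        True := fun _ _ _ => trivial
    constructor
    · -- eR (n+1) ≤ 3^(n+1)
      have hsub : (S (n+1)).filter (fun s => s+1 ∉ S (n+1)) ⊆
          (((S n).filter (fun s => s-1 ∉ S n)).image (fun s => 4*s)) ∪
          (((S n).filter (fun s => s+1 ∉ S n)).image (fun s => 4*s+3)) ∪
          (((S n).filter (fun s => s+1 ∉ S n)).image (fun s => 4*s+5)) := by
        intro x hx
        rw [Finset.mem_filter] at hx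
        obtain ⟨hxS, hxnot⟩ := hx
        rw [mem_S_succ] at hxS
        obtain ⟨s, hs, hcase⟩ := hxS
        simp only [Finset.mem_union, Finset.mem_image, Finset.mem_filter]
        rcases hcase with h|h|h|h
        · -- x = 4s : x+1 = 4(s-1)+5
          left; left
          refine ⟨s, ⟨hs, fun hmem => hxnot ?_⟩, h.symm⟩
          rw [mem_S_succ]; exact ⟨s-1, hmem, by omega⟩
        · -- x = 4s+2: x+1 = 4s+3 ∈ S (n+1), contradiction
          exact absurd (mem_S_succ.2 ⟨s, hs, Or.inr (Or.inr (Or.inl (by omega))) ⟩) hxnot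
        · left; right
          refine ⟨s, ⟨hs, fun hmem => hxnot ?_⟩, h.symm⟩
          rw [mem_S_succ]; exact ⟨s+1, hmem, by omega⟩
        · right
          refine ⟨s, ⟨hs, fun hmem => hxnot ?_⟩, h.symm⟩
          rw [mem_S_succ]; exact ⟨s+1, hmem, by omega⟩
      calc eR (n+1) ≤ _ := Finset.card_le_card hsub
        _ ≤ _ := (Finset.card_union_le _ _)
        _ ≤ lR n + eR n + eR n := by
            refine Nat.add_le_add (le_trans (Finset.card_union_le _ _) ?_) ?_
            · exact Nat.add_le_add (Finset.card_image_le) (Finset.card_image_le)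
            · exact Finset.card_image_le
        _ ≤ 3^n + 3^n + 3^n := by omega
        _ = 3^(n+1) := by ring
    · have hsub : (S (n+1)).filter (fun s => s-1 ∉ S (n+1)) ⊆
          (((S n).filter (fun s => s-1 ∉ S n)).image (fun s => 4*s)) ∪
          (((S n).filter (fun s => s-1 ∉ S n)).image (fun s => 4*s+2)) ∪
          (((S n).filter (fun s => s+1 ∉ S n)).image (fun s => 4*s+5)) := by
        intro x hx
        rw [Finset.mem_filter] at hx
        obtain ⟨hxS, hxnot⟩ := hx
        rw [mem_S_succ] at hxS
        obtain ⟨s, hs, hcase⟩ := hxS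
        simp only [Finset.mem_union, Finset.mem_image, Finset.mem_filter]
        rcases hcase with h|h|h|h
        · -- x=4s: x-1 = 4(s-1)+3
          left; left
          refine ⟨s, ⟨hs, fun hmem => hxnot ?_⟩, h.symm⟩
          rw [mem_S_succ]; exact ⟨s-1, hmem, by omega⟩
        · -- x=4s+2: x-1 = 4(s-1)+5
          left; right
          refine ⟨s, ⟨hs, fun hmem => hxnot ?_⟩, h.symm⟩
          rw [mem_S_succ]; exact ⟨s-1, hmem, by omega⟩
        · -- x=4s+3: x-1 = 4s+2 ∈ S(n+1): contradiction
          exact absurd (mem_S_succ.2 ⟨s, hs, Or.inr (Or.inl (by omega))⟩) hxnot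
        · -- x=4s+5: x-1 = 4(s+1)
          right
          refine ⟨s, ⟨hs, fun hmem => hxnot ?_⟩, h.symm⟩
          rw [mem_S_succ]; exact ⟨s+1, hmem, by omega⟩
      calc lR (n+1) ≤ _ := Finset.card_le_card hsub
        _ ≤ _ := (Finset.card_union_le _ _)
        _ ≤ lR n + lR n + eR n := by
            refine Nat.add_le_add (le_trans (Finset.card_union_le _ _) ?_) ?_
            · exact Nat.add_le_add (Finset.card_image_le) (Finset.card_image_le)
            · exact Finset.card_image_le
        _ ≤ 3^n + 3^n + 3^n := by omega
        _ = 3^(n+1) := by ring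


lemma eR_bound (n : ℕ) : eR n ≤ 3^n := (el_bound n).1

-- prefix lemma
lemma prefix_mem : ∀ (n : ℕ), ∀ s ∈ S n, ∀ x ∈ GN, ((s:ℝ) + x)/4^n ∈ GN := by
  intro n
  induction n with
  | zero =>
    intro s hs x hx
    have : s = 0 := by simpa [S] using hs
    subst this; simpa using hx
  | succ n ih =>
    intro s' hs' x hx
    rw [mem_S_succ] at hs'
    obtain ⟨s, hs, hcase⟩ := hs'
    have key : ∀ d : ℕ, d ∈ ({0, 2, 3, 5} : Set ℕ) → (s':ℝ) = 4*s + d →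
        ((s':ℝ) + x)/4^(n+1) ∈ GN := by
      intro d hd heq
      have h1 : ((s':ℝ) + x)/4^(n+1) = ((s:ℝ) + ((d:ℝ) + x)/4)/4^n := by
        rw [heq]; field_simp; ring
      rw [h1]
      exact ih s hs _ (prepend hx hd)
    rcases hcase with h|h|h|h
    · exact key 0 (by simp) (by rw [h]; push_cast; ring)
    · exact key 2 (by norm_num [Set.mem_insert_iff]) (by rw [h]; push_cast; ring)
    · exact key 3 (by norm_num [Set.mem_insert_iff]) (by rw [h]; push_cast; ring)
    · exact key 5 (by norm_num [Set.mem_insert_iff]) (by rw [h]; push_cast; ring)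

-- decomposition: x ∈ GN → x = (p + t)/4^n with p ∈ S n, t ∈ GN
lemma decomp {x : ℝ} (hx : x ∈ GN) (n : ℕ) :
    ∃ p ∈ S n, ∃ t ∈ GN, x = ((p:ℝ) + t)/4^n := by
  obtain ⟨ε, hε, rfl⟩ := hx
  have hsum : Summable (fun k : ℕ => (ε k : ℝ)/4^(k+1)) := summable_eps (dig_le hε)
  -- integer prefix
  set p : ℕ → ℤ := fun m => Nat.rec 0 (fun k pk => 4*pk + (ε k : ℤ)) m with hp
  have hp0 : p 0 = 0 := rfl
  have hpsucc : ∀ k, p (k+1) = 4 * p k + (ε k : ℤ) := fun k => rfl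
  have hpS : ∀ m, p m ∈ S m := by
    intro m
    induction m with
    | zero => simp [S, hp0]
    | succ k ihk =>
      rw [mem_S_succ]
      refine ⟨p k, ihk, ?_⟩
      rcases hε k with h|h|h|h <;> rw [hpsucc, h] <;> push_cast <;> omega
  have hsum_prefix : ∀ m, ∑ k ∈ Finset.range m, (ε k : ℝ)/4^(k+1) = (p m : ℝ)/4^m := by
    intro m
    induction m with
    | zero => simp [hp0]
    | succ k ihk =>
      rw [Finset.sum_range_succ, ihk, hpsucc]
      push_cast
      field_simp
      ring
  -- tail
  set t : ℝ := ∑' k : ℕ, (ε (n+k) : ℝ)/4^(k+1) with ht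
  have htail : t ∈ GN := ⟨fun k => ε (n+k), fun k => hε (n+k), rfl⟩
  refine ⟨p n, hpS n, t, htail, ?_⟩
  have hsplit := Summable.sum_add_tsum_nat_add n hsum
  rw [← hsplit, hsum_prefix n]
  have : ∑' (k : ℕ), (ε (k + n) : ℝ)/4^(k + n + 1) = t/4^n := by
    rw [ht, ← tsum_div_const]
    congr 1; funext k
    rw [show n + k = k + n by ring]
    rw [div_div, ← pow_add]
    ring_nf
  rw [this]
  field_simp


lemma q0 {x : ℝ} (hx : x ∈ GN) : x/4 ∈ GN := by
  have := prepend hx (d := 0) (by simp)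
  simpa using this

lemma q2 {x : ℝ} (hx : x ∈ GN) : (2+x)/4 ∈ GN := by
  have := prepend hx (d := 2) (by norm_num [Set.mem_insert_iff])
  simpa using this

lemma q3 {x : ℝ} (hx : x ∈ GN) : (3+x)/4 ∈ GN := by
  have := prepend hx (d := 3) (by norm_num [Set.mem_insert_iff])
  simpa using this

lemma approx (n : ℕ) :
    (∀ x : ℝ, 2/3 ≤ x → x ≤ 1 → ∃ y ∈ GN, |x - y| ≤ 2/4^n) ∧
    (∀ t : ℝ, 0 ≤ t → t ≤ 2/3 →
      ∃ y, y ∈ GN ∧ 0 ≤ y ∧ y ≤ 2/3 ∧ (|t - y| ≤ 2/4^n ∨ |(2/3 - t) - y| ≤ 2/4^n)) := by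
  induction n with
  | zero =>
    constructor
    · intro x h1 h2
      exact ⟨0, zero_mem, by rw [abs_of_nonneg (by linarith)]; norm_num; linarith⟩
    · intro t h1 h2
      exact ⟨0, zero_mem, le_refl _, by norm_num,
        Or.inl (by rw [abs_of_nonneg (by linarith)]; norm_num; linarith)⟩
  | succ n ih =>
    obtain ⟨A, Q⟩ := ih
    have hpow : (2:ℝ)/4^(n+1) = (2/4^n)/4 := by rw [pow_succ]; ring
    have habs : ∀ c e : ℝ, |c| ≤ e → |c/4| ≤ e/4 := by
      intro c e h
      rw [abs_div, abs_of_nonneg (by norm_num : (0:ℝ) ≤ 4)]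
      linarith
    constructor
    · -- A part
      intro x hx1 hx2
      set z := 4*x - 2 with hz
      have hz1 : 2/3 ≤ z := by simp [hz]; linarith
      have hz2 : z ≤ 2 := by simp [hz]; linarith
      rcases le_or_gt z 1 with hc | hc
      · obtain ⟨y, hy, herr⟩ := A z hz1 hc
        refine ⟨(2+y)/4, q2 hy, ?_⟩
        have h4 : x - (2+y)/4 = (z - y)/4 := by rw [hz]; ring
        rw [h4, hpow]; exact habs _ _ herr
      · rcases le_or_gt z (5/3) with hc2 | hc2
        · set u := 5/3 - z with hu
          obtain ⟨y, hy, hy0, hy23, hd⟩ := Q u (by rw [hu]; linarith) (by rw [hu]; linarith)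
          rcases hd with herr | herr
          · refine ⟨(2+(5/3 - y))/4, q2 (symm_mem hy), ?_⟩
            have h4 : x - (2+(5/3-y))/4 = (y - u)/4 := by rw [hu, hz]; ring
            rw [h4, hpow]
            exact habs _ _ (by rw [abs_sub_comm] at herr; exact herr)
          · refine ⟨(3+y)/4, q3 hy, ?_⟩
            have h4 : x - (3+y)/4 = ((2/3 - u) - y)/4 := by rw [hu, hz]; ring
            rw [h4, hpow]; exact habs _ _ herr
        · obtain ⟨y, hy, herr⟩ := A (z-1) (by linarith) (by linarith)
          refine ⟨(3+y)/4, q3 hy, ?_⟩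
          have h4 : x - (3+y)/4 = ((z-1) - y)/4 := by rw [hz]; ring
          rw [h4, hpow]; exact habs _ _ herr
    · -- Q part
      intro t ht1 ht2
      set z := 4*t with hz
      have hz0 : 0 ≤ z := by rw [hz]; linarith
      have hz8 : z ≤ 8/3 := by rw [hz]; linarith
      rcases le_or_gt z (2/3) with hc | hc
      · obtain ⟨y, hy, hy0, hy23, hd⟩ := Q z hz0 hc
        rcases hd with herr | herr
        · refine ⟨y/4, q0 hy, by linarith, by linarith, Or.inl ?_⟩
          have h4 : t - y/4 = (z - y)/4 := by rw [hz]; ring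
          rw [h4, hpow]; exact habs _ _ herr
        · refine ⟨(2+y)/4, q2 hy, by linarith, by linarith, Or.inr ?_⟩
          have h4 : (2/3 - t) - (2+y)/4 = ((2/3 - z) - y)/4 := by rw [hz]; ring
          rw [h4, hpow]; exact habs _ _ herr
      · rcases le_or_gt z 1 with hc2 | hc2
        · obtain ⟨y, hy, herr⟩ := A z (by linarith) hc2
          obtain ⟨hy0, hy53⟩ := GN_subset hy
          refine ⟨y/4, q0 hy, by linarith, by linarith, Or.inl ?_⟩
          have h4 : t - y/4 = (z - y)/4 := by rw [hz]; ring
          rw [h4, hpow]; exact habs _ _ herr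
        · rcases le_or_gt z (5/3) with hc3 | hc3
          · set u := 5/3 - z with hu
            obtain ⟨y, hy, hy0, hy23, hd⟩ := Q u (by rw [hu]; linarith) (by rw [hu]; linarith)
            have hmem : (5/3 - y)/4 ∈ GN := q0 (symm_mem hy)
            rcases hd with herr | herr
            · refine ⟨(5/3 - y)/4, hmem, by linarith, by linarith, Or.inl ?_⟩
              have h4 : t - (5/3 - y)/4 = (y - u)/4 := by rw [hu, hz]; ring
              rw [h4, hpow]
              exact habs _ _ (by rw [abs_sub_comm] at herr; exact herr)
            · refine ⟨(5/3 - y)/4, hmem, by linarith, by linarith, Or.inr ?_⟩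
              have h4 : (2/3 - t) - (5/3 - y)/4 = (y - (2/3 - u))/4 := by rw [hu, hz]; ring
              rw [h4, hpow]
              exact habs _ _ (by rw [abs_sub_comm] at herr; exact herr)
          · rcases le_or_gt z 2 with hc4 | hc4
            · obtain ⟨y, hy, herr⟩ := A (z-1) (by linarith) (by linarith)
              obtain ⟨hy0, hy53⟩ := GN_subset hy
              refine ⟨(5/3 - y)/4, q0 (symm_mem hy), by linarith, by linarith, Or.inr ?_⟩
              have h4 : (2/3 - t) - (5/3 - y)/4 = (y - (z-1))/4 := by rw [hz]; ring
              rw [h4, hpow]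
              exact habs _ _ (by rw [abs_sub_comm] at herr; exact herr)
            · set v := z - 2 with hv
              obtain ⟨y, hy, hy0, hy23, hd⟩ := Q v (by rw [hv]; linarith) (by rw [hv]; linarith)
              rcases hd with herr | herr
              · refine ⟨(2+y)/4, q2 hy, by linarith, by linarith, Or.inl ?_⟩
                have h4 : t - (2+y)/4 = (v - y)/4 := by rw [hv, hz]; ring
                rw [h4, hpow]; exact habs _ _ herr
              · refine ⟨y/4, q0 hy, by linarith, by linarith, Or.inr ?_⟩
                have h4 : (2/3 - t) - y/4 = ((2/3 - v) - y)/4 := by rw [hv, hz]; ring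
                rw [h4, hpow]; exact habs _ _ herr

lemma A_mem {x : ℝ} (h1 : 2/3 ≤ x) (h2 : x ≤ 1) : x ∈ GN := by
  rw [← isClosed_GN.closure_eq]
  rw [Metric.mem_closure_iff]
  intro δ hδ
  obtain ⟨m, hm⟩ := exists_pow_lt_of_lt_one (by positivity : (0:ℝ) < δ/2) (by norm_num : (1:ℝ)/4 < 1)
  obtain ⟨y, hy, herr⟩ := (approx m).1 x h1 h2
  refine ⟨y, hy, ?_⟩
  rw [Real.dist_eq]
  have h14 : ((1:ℝ)/4)^m = 1/4^m := by rw [div_pow]; norm_num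
  calc |x - y| ≤ 2/4^m := herr
    _ = 2 * (1/4)^m := by rw [h14]; ring
    _ < 2 * (δ/2) := by
        apply mul_lt_mul_of_pos_left hm (by norm_num)
    _ = δ := by ring

lemma Q_mem {t : ℝ} (h1 : 0 ≤ t) (h2 : t ≤ 2/3) : t ∈ GN ∨ (2/3 - t) ∈ GN := by
  set a := infDist t GN with ha
  set b := infDist (2/3 - t) GN with hb
  have hne : GN.Nonempty := ⟨0, zero_mem⟩
  have key : ∀ m : ℕ, min a b ≤ 2/4^m := by
    intro m
    obtain ⟨y, hy, _, _, hd⟩ := (approx m).2 t h1 h2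
    rcases hd with herr | herr
    · exact le_trans (min_le_left _ _) (le_trans (infDist_le_dist_of_mem hy) (by rwa [Real.dist_eq]))
    · exact le_trans (min_le_right _ _) (le_trans (infDist_le_dist_of_mem hy) (by rwa [Real.dist_eq]))
  have hminle : min a b ≤ 0 := by
    by_contra hpos
    push_neg at hpos
    obtain ⟨m, hm⟩ := exists_pow_lt_of_lt_one (by positivity : (0:ℝ) < (min a b)/2) (by norm_num : (1:ℝ)/4 < 1)
    have h2m := key m
    have h14 : ((1:ℝ)/4)^m = 1/4^m := by rw [div_pow]; norm_num
    have : (2:ℝ)/4^m < min a b := by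
      calc (2:ℝ)/4^m = 2 * (1/4)^m := by rw [h14]; ring
        _ < 2 * ((min a b)/2) := mul_lt_mul_of_pos_left hm (by norm_num)
        _ = min a b := by ring
    linarith
  have hmin0 : min a b = 0 := le_antisymm hminle (le_min (infDist_nonneg) (infDist_nonneg))
  rcases min_eq_iff.mp hmin0 with ⟨h, _⟩ | ⟨h, _⟩
  · left; exact (isClosed_GN.mem_iff_infDist_zero hne).mpr h
  · right; exact (isClosed_GN.mem_iff_infDist_zero hne).mpr h


noncomputable def Lup (n : ℕ) (s : ℤ) : ℝ := if s+1 ∈ S n then 1 else 5/3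
noncomputable def Llo (n : ℕ) (s : ℤ) : ℝ := if s+1 ∈ S n then 5/3 else 1

lemma Lup_ge (n : ℕ) (s : ℤ) : 1 ≤ Lup n s := by unfold Lup; split <;> norm_num
lemma Lup_le (n : ℕ) (s : ℤ) : Lup n s ≤ 5/3 := by unfold Lup; split <;> norm_num
lemma Llo_ge (n : ℕ) (s : ℤ) : 1 ≤ Llo n s := by unfold Llo; split <;> norm_num
lemma Llo_le (n : ℕ) (s : ℤ) : Llo n s ≤ 5/3 := by unfold Llo; split <;> norm_num

lemma upper_cover (n : ℕ) :
    GN ⊆ ⋃ s ∈ S n, Set.Icc ((s:ℝ)/4^n) (((s:ℝ) + Lup n s)/4^n) := by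
  intro x hx
  obtain ⟨p, hp, t, ht, rfl⟩ := decomp hx n
  obtain ⟨ht0, ht53⟩ := GN_subset ht
  have hc : (0:ℝ) < 4^n := by positivity
  rcases le_or_gt t (Lup n p) with hcase | hcase
  · refine Set.mem_biUnion hp ?_
    rw [Set.mem_Icc]
    constructor
    · rw [div_le_div_iff_of_pos_right hc]
      linarith
    · rw [div_le_div_iff_of_pos_right hc]
      linarith
  · have hmem : p + 1 ∈ S n := by
      by_contra hnot
      have : Lup n p = 5/3 := by unfold Lup; rw [if_neg hnot]
      rw [this] at hcase; linarith
    have hLup1 : Lup n p = 1 := by unfold Lup; rw [if_pos hmem]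
    have hL1 : 1 ≤ Lup n (p+1) := Lup_ge n (p+1)
    refine Set.mem_biUnion hmem ?_
    rw [Set.mem_Icc]
    push_cast
    constructor
    · rw [div_le_div_iff_of_pos_right hc]
      linarith
    · rw [div_le_div_iff_of_pos_right hc]
      linarith

lemma lower_cover (n : ℕ) :
    (⋃ s ∈ S n, Set.Ico (((s:ℝ)+2/3)/4^n) (((s:ℝ)+Llo n s)/4^n)) ⊆ GN := by
  intro x hx
  simp only [Set.mem_iUnion, exists_prop] at hx
  obtain ⟨s, hs, hlo, hhi⟩ := hx
  have hc : (0:ℝ) < 4^n := by positivity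
  have hu1 : (s:ℝ) + 2/3 ≤ 4^n * x := by
    rw [div_le_iff₀ hc] at hlo; linarith [hlo]
  have hu2 : 4^n * x < (s:ℝ) + Llo n s := by
    rw [lt_div_iff₀ hc] at hhi; linarith [hhi]
  set u : ℝ := 4^n * x - s with hu
  have hkey : x = ((s:ℝ) + u)/4^n := by rw [hu]; field_simp; ring
  have hu23 : 2/3 ≤ u := by rw [hu]; linarith
  have hu53 : u < 5/3 := by
    have := Llo_le n s; rw [hu]; linarith
  rcases le_or_gt u 1 with hcase | hcase
  · rw [hkey]
    exact prefix_mem n s hs u (A_mem hu23 hcase)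
  · have hmem : s + 1 ∈ S n := by
      by_contra hnot
      have : Llo n s = 1 := by unfold Llo; rw [if_neg hnot]
      rw [this] at hu2; rw [hu] at hcase; linarith
    have hw0 : 0 ≤ u - 1 := by linarith
    have hw23 : u - 1 ≤ 2/3 := by linarith
    rcases Q_mem hw0 hw23 with h | h
    · have := prefix_mem n (s+1) hmem (u-1) h
      rw [hkey]
      convert this using 2
      push_cast; ring
    · have h2 : u ∈ GN := by
        have := symm_mem h
        convert this using 1
        ring
      rw [hkey]
      exact prefix_mem n s hs u h2

lemma disj_Ico {a b a' b' : ℝ} (h : b ≤ a') : Disjoint (Set.Ico a b) (Set.Ico a' b') := by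
  rw [Set.disjoint_left]
  rintro x ⟨_, hxb⟩ ⟨hxa', _⟩
  linarith

lemma lower_disj (n : ℕ) : Set.PairwiseDisjoint (↑(S n) : Set ℤ)
    (fun s => Set.Ico (((s:ℝ)+2/3)/4^n) (((s:ℝ)+Llo n s)/4^n)) := by
  have hc : (0:ℝ) < 4^n := by positivity
  have key : ∀ s s' : ℤ, s < s' →
      Disjoint (Set.Ico (((s:ℝ)+2/3)/4^n) (((s:ℝ)+Llo n s)/4^n))
        (Set.Ico (((s':ℝ)+2/3)/4^n) (((s':ℝ)+Llo n s')/4^n)) := by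
    intro s s' hlt
    apply disj_Ico
    rw [div_le_div_iff_of_pos_right hc]
    have h1 : (s:ℝ) + 1 ≤ s' := by exact_mod_cast hlt
    have := Llo_le n s
    linarith
  intro s hsm s' hsm' hne
  rcases lt_or_gt_of_ne hne with h | h
  · exact key s s' h
  · exact (key s' s h).symm

lemma vol_lower (n : ℕ) :
    ENNReal.ofReal (1 - (2/3)*(3/4)^n) ≤ volume GN := by
  have hc : (0:ℝ) < 4^n := by positivity
  have hvol : volume (⋃ s ∈ S n, Set.Ico (((s:ℝ)+2/3)/4^n) (((s:ℝ)+Llo n s)/4^n))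
      = ∑ s ∈ S n, ENNReal.ofReal ((Llo n s - 2/3)/4^n) := by
    rw [measure_biUnion_finset (lower_disj n) (fun s _ => measurableSet_Ico)]
    apply Finset.sum_congr rfl
    intro s _
    rw [Real.volume_Ico]
    congr 1
    ring
  have hsum : ∑ s ∈ S n, ENNReal.ofReal ((Llo n s - 2/3)/4^n)
      = ENNReal.ofReal (∑ s ∈ S n, (Llo n s - 2/3)/4^n) := by
    rw [ENNReal.ofReal_sum_of_nonneg]
    intro s _
    have h := Llo_ge n s
    have h2 : (0:ℝ) ≤ Llo n s - 2/3 := by linarith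
    positivity
  have hval : ∑ s ∈ S n, (Llo n s - 2/3)/4^n = ((S n).card - (2/3) * eR n)/4^n := by
    rw [← Finset.sum_div]
    congr 1
    have hcongr : ∑ s ∈ S n, (Llo n s - 2/3)
        = ∑ s ∈ S n, (if s+1 ∈ S n then (1:ℝ) else 1/3) := by
      apply Finset.sum_congr rfl
      intro s _
      unfold Llo; split <;> norm_num
    rw [hcongr, Finset.sum_ite, Finset.sum_const, Finset.sum_const, nsmul_eq_mul, nsmul_eq_mul]
    have hcard : ((S n).filter (fun s => s+1 ∈ S n)).card
        + ((S n).filter (fun s => ¬(s+1 ∈ S n))).card = (S n).card :=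
      Finset.card_filter_add_card_filter_not (fun s => s+1 ∈ S n)
    have heq : ((S n).filter (fun s => ¬(s+1 ∈ S n))).card = eR n := rfl
    rw [heq] at hcard
    rw [heq]
    rw [show (((S n).filter (fun s => s+1 ∈ S n)).card : ℝ) = (S n).card - eR n by
      rw [← hcard]; push_cast; ring]
    ring
  have hle : (1:ℝ) - (2/3)*(3/4)^n ≤ ((S n).card - (2/3) * eR n)/4^n := by
    rw [S_card n]
    have heR : (eR n : ℝ) ≤ 3^n := by exact_mod_cast eR_bound n
    have h34 : ((3:ℝ)/4)^n = 3^n/4^n := by rw [div_pow]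
    have h1 : (eR n:ℝ)/4^n ≤ 3^n/4^n := by gcongr
    have key : ((4:ℝ)^n - (2/3)*(eR n:ℝ))/4^n = 1 - (2/3)*((eR n:ℝ)/4^n) := by
      field_simp
    push_cast
    rw [key, h34]
    linarith
  calc ENNReal.ofReal (1 - (2/3)*(3/4)^n)
      ≤ ENNReal.ofReal (((S n).card - (2/3) * eR n)/4^n) := ENNReal.ofReal_le_ofReal hle
    _ = ∑ s ∈ S n, ENNReal.ofReal ((Llo n s - 2/3)/4^n) := by rw [hsum, hval]
    _ = volume (⋃ s ∈ S n, Set.Ico (((s:ℝ)+2/3)/4^n) (((s:ℝ)+Llo n s)/4^n)) := hvol.symm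
    _ ≤ volume GN := measure_mono (lower_cover n)

lemma vol_upper (n : ℕ) :
    volume GN ≤ ENNReal.ofReal (1 + (2/3)*(3/4)^n) := by
  have hc : (0:ℝ) < 4^n := by positivity
  have h1 : volume GN ≤ ∑ s ∈ S n, ENNReal.ofReal ((Lup n s)/4^n) := by
    refine le_trans (measure_mono (upper_cover n)) ?_
    refine le_trans (measure_biUnion_finset_le _ _) ?_
    apply Finset.sum_le_sum
    intro s _
    rw [Real.volume_Icc]
    apply ENNReal.ofReal_le_ofReal
    apply le_of_eq
    ring
  have hsum : ∑ s ∈ S n, ENNReal.ofReal ((Lup n s)/4^n)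
      = ENNReal.ofReal (∑ s ∈ S n, (Lup n s)/4^n) := by
    rw [ENNReal.ofReal_sum_of_nonneg]
    intro s _
    have h := Lup_ge n s
    positivity
  have hval : ∑ s ∈ S n, (Lup n s)/4^n = ((S n).card + (2/3) * eR n)/4^n := by
    rw [← Finset.sum_div]
    congr 1
    have hcongr : ∑ s ∈ S n, Lup n s
        = ∑ s ∈ S n, (if s+1 ∈ S n then (1:ℝ) else 5/3) := by
      apply Finset.sum_congr rfl
      intro s _
      unfold Lup; split <;> norm_num
    rw [hcongr, Finset.sum_ite, Finset.sum_const, Finset.sum_const, nsmul_eq_mul, nsmul_eq_mul]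
    have hcard : ((S n).filter (fun s => s+1 ∈ S n)).card
        + ((S n).filter (fun s => ¬(s+1 ∈ S n))).card = (S n).card :=
      Finset.card_filter_add_card_filter_not (fun s => s+1 ∈ S n)
    have heq : ((S n).filter (fun s => ¬(s+1 ∈ S n))).card = eR n := rfl
    rw [heq] at hcard
    rw [heq]
    rw [show (((S n).filter (fun s => s+1 ∈ S n)).card : ℝ) = (S n).card - eR n by
      rw [← hcard]; push_cast; ring]
    ring
  have hle : ((S n).card + (2/3) * eR n)/4^n ≤ (1:ℝ) + (2/3)*(3/4)^n := by
    rw [S_card n]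
    have heR : (eR n : ℝ) ≤ 3^n := by exact_mod_cast eR_bound n
    have h34 : ((3:ℝ)/4)^n = 3^n/4^n := by rw [div_pow]
    have h1 : (eR n:ℝ)/4^n ≤ 3^n/4^n := by gcongr
    have key : ((4:ℝ)^n + (2/3)*(eR n:ℝ))/4^n = 1 + (2/3)*((eR n:ℝ)/4^n) := by
      field_simp
    push_cast
    rw [key, h34]
    linarith
  calc volume GN ≤ ∑ s ∈ S n, ENNReal.ofReal ((Lup n s)/4^n) := h1
    _ = ENNReal.ofReal (((S n).card + (2/3) * eR n)/4^n) := by rw [hsum, hval]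
    _ ≤ ENNReal.ofReal (1 + (2/3)*(3/4)^n) := ENNReal.ofReal_le_ofReal hle

end GNAux

open GNAux Filter

theorem stmt16 : volume GN = 1 := by
  have h34 : Tendsto (fun n : ℕ => ((3:ℝ)/4)^n) atTop (nhds 0) :=
    tendsto_pow_atTop_nhds_zero_of_lt_one (by norm_num) (by norm_num)
  have hup : Tendsto (fun n : ℕ => ENNReal.ofReal (1 + (2/3)*(3/4)^n)) atTop (nhds 1) := by
    have : Tendsto (fun n : ℕ => (1:ℝ) + (2/3)*(3/4)^n) atTop (nhds 1) := by
      have := (h34.const_mul (2/3:ℝ)).const_add (1:ℝ)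
      simpa using this
    have h2 := (ENNReal.continuous_ofReal.tendsto 1).comp this
    simpa [Function.comp_def] using h2
  have hlo : Tendsto (fun n : ℕ => ENNReal.ofReal (1 - (2/3)*(3/4)^n)) atTop (nhds 1) := by
    have : Tendsto (fun n : ℕ => (1:ℝ) - (2/3)*(3/4)^n) atTop (nhds 1) := by
      have := (h34.const_mul (2/3:ℝ)).const_sub (1:ℝ)
      simpa using this
    have h2 := (ENNReal.continuous_ofReal.tendsto 1).comp this
    simpa [Function.comp_def] using h2
  refine le_antisymm ?_ ?_
  · exact ge_of_tendsto hup (Filter.Eventually.of_forall vol_upper)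
  · exact le_of_tendsto hlo (Filter.Eventually.of_forall vol_lower)
end

section
/- The interval [2/3, 1] is contained in the Guthrie–Nymann set K_1 = { ∑_{n=1}^∞ ε_n/4^n : (ε_n) ∈ {0,2,3,5}^ℕ }. -/
open MeasureTheory

namespace GNaux

def dig : Fin 4 → ℕ := ![0, 2, 3, 5]

noncomputable def gnF (ε : ℕ → Fin 4) : ℝ := ∑' n : ℕ, (dig (ε n) : ℝ) / 4 ^ (n + 1)

lemma hasSum_c (c : ℝ) : HasSum (fun n : ℕ => c / 4 ^ (n + 1)) (c / 3) := by
  have h : HasSum (fun n : ℕ => (1/4 : ℝ) ^ n) (1 - 1/4)⁻¹ :=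
    hasSum_geometric_of_lt_one (by norm_num) (by norm_num)
  have h2 := h.mul_left (c / 4)
  have he : (fun n : ℕ => c / 4 * (1/4 : ℝ) ^ n) = fun n : ℕ => c / 4 ^ (n + 1) := by
    funext n
    rw [pow_succ]
    rw [div_pow, one_pow]
    ring
  have hv : c / 4 * ((1 : ℝ) - 1/4)⁻¹ = c / 3 := by norm_num; ring
  rw [he, hv] at h2
  exact h2

lemma dig_le (j : Fin 4) : dig j ≤ 5 := by fin_cases j <;> simp [dig]

lemma term_le (ε : ℕ → Fin 4) (n : ℕ) :
    (dig (ε n) : ℝ) / 4 ^ (n + 1) ≤ 5 / 4 ^ (n + 1) := by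
  have h5 : ((dig (ε n) : ℕ) : ℝ) ≤ 5 := by exact_mod_cast dig_le (ε n)
  have hp : (0 : ℝ) < 4 ^ (n + 1) := by positivity
  exact (div_le_div_iff_of_pos_right hp).mpr h5

lemma summable_gn (ε : ℕ → Fin 4) :
    Summable (fun n : ℕ => (dig (ε n) : ℝ) / 4 ^ (n + 1)) :=
  Summable.of_nonneg_of_le (fun n => by positivity) (term_le ε) (hasSum_c 5).summable

lemma continuous_gnF : Continuous gnF := by
  apply continuous_tsum (u := fun n : ℕ => (5:ℝ) / 4 ^ (n + 1))
  · intro n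
    have hc : Continuous fun v : Fin 4 => (dig v : ℝ) / 4 ^ (n + 1) :=
      continuous_of_discreteTopology
    exact hc.comp (continuous_apply n)
  · exact (hasSum_c 5).summable
  · intro n ε
    rw [Real.norm_eq_abs, abs_of_nonneg (by positivity)]
    exact term_le ε n

lemma key : ∀ M k : ℕ, 2 * 4 ^ M ≤ 3 * k + 2 → k < 4 ^ M →
    ∃ ε : ℕ → Fin 4, (∀ n, M ≤ n → ε n = 1) ∧
      gnF ε = ((k : ℝ) + 2/3) / 4 ^ M := by
  intro M
  induction M with
  | zero =>
    intro k _ hk2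
    have hk0 : k = 0 := by omega
    subst hk0
    refine ⟨fun _ => 1, fun n _ => rfl, ?_⟩
    have h1 : gnF (fun _ => 1) = ∑' n : ℕ, (2 : ℝ) / 4 ^ (n + 1) := by
      unfold gnF; norm_num [dig]
    rw [h1, (hasSum_c 2).tsum_eq]
    norm_num
  | succ M ih =>
    intro k h1 h2
    have hN : 0 < 4 ^ M := by positivity
    have hmod3 : 4 ^ M % 3 = 1 := by
      rw [Nat.pow_mod]
      simp
    -- choose last digit
    obtain ⟨q, j, hkq, hq1, hq2⟩ :
        ∃ (q : ℕ) (j : Fin 4), k = 4 * q + dig j ∧ 2 * 4 ^ M ≤ 3 * q + 2 ∧ q < 4 ^ M := by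
      have hmod : k % 4 = 0 ∨ k % 4 = 1 ∨ k % 4 = 2 ∨ k % 4 = 3 := by omega
      have hpow : (4:ℕ) ^ (M+1) = 4 * 4 ^ M := by ring
      rw [hpow] at h1 h2
      rcases hmod with h | h | h | h
      · exact ⟨k / 4, 0, by simp [dig]; omega, by omega, by omega⟩
      · exact ⟨k / 4 - 1, 3, by simp [dig]; omega, by omega, by omega⟩
      · exact ⟨k / 4, 1, by simp [dig]; omega, by omega, by omega⟩
      · exact ⟨k / 4, 2, by simp [dig]; omega, by omega, by omega⟩
    obtain ⟨ε, hεtail, hεval⟩ := ih q hq1 hq2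
    refine ⟨Function.update ε M j, ?_, ?_⟩
    · intro n hn
      rw [Function.update_of_ne (by omega)]
      exact hεtail n (by omega)
    · have h12 : (dig 1 : ℝ) = 2 := by norm_num [dig]
      have hfun : (fun n : ℕ => (dig (Function.update ε M j n) : ℝ) / 4 ^ (n + 1)) =
          fun n : ℕ => (dig (ε n) : ℝ) / 4 ^ (n + 1) +
            (if n = M then ((dig j : ℝ) - 2) / 4 ^ (M + 1) else 0) := by
        funext n
        by_cases hn : n = M
        · subst hn
          rw [Function.update_self, if_pos rfl, hεtail n le_rfl, h12]
          ring
        · rw [Function.update_of_ne hn, if_neg hn, add_zero]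
      have hsum2 : Summable (fun n : ℕ =>
          if n = M then ((dig j : ℝ) - 2) / 4 ^ (M + 1) else 0) :=
        (hasSum_ite_eq M _).summable
      have hup : gnF (Function.update ε M j) =
          gnF ε + ((dig j : ℝ) - 2) / 4 ^ (M + 1) := by
        unfold gnF
        rw [hfun, Summable.tsum_add (summable_gn ε) hsum2, tsum_ite_eq]
      rw [hup, hεval]
      have hkR : (k : ℝ) = 4 * q + dig j := by exact_mod_cast hkq
      rw [hkR]
      have h4 : (4 : ℝ) ^ M ≠ 0 := by positivity
      field_simp
      ring

lemma range_subset : Set.range gnF ⊆ GN := by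
  rintro x ⟨ε, rfl⟩
  refine ⟨fun n => dig (ε n), fun n => ?_, rfl⟩
  have h : ∀ j : Fin 4, dig j ∈ ({0, 2, 3, 5} : Set ℕ) := by
    intro j; fin_cases j <;> simp [dig]
  exact h (ε n)

end GNaux

theorem stmt17 : Set.Icc (2 / 3 : ℝ) 1 ⊆ GN := by
  intro x hx
  obtain ⟨hx1, hx2⟩ := hx
  have hclosed : IsClosed (Set.range GNaux.gnF) :=
    (isCompact_range GNaux.continuous_gnF).isClosed
  have hx_mem : x ∈ Set.range GNaux.gnF := by
    rw [← hclosed.closure_eq]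
    rw [Metric.mem_closure_iff]
    intro δ hδ
    obtain ⟨M, hM⟩ := exists_pow_lt_of_lt_one hδ (show (1/4 : ℝ) < 1 by norm_num)
    have hM' : (1 : ℝ) / 4 ^ M < δ := by
      rwa [div_pow, one_pow] at hM
    have hNpos : (0 : ℝ) < 4 ^ M := by positivity
    set fl : ℕ := Nat.floor ((4:ℝ) ^ M * x) with hfl
    set k : ℕ := min (4 ^ M - 1) fl with hk
    have hxpos : (0:ℝ) ≤ (4:ℝ) ^ M * x := by nlinarith
    have hfl_le : (fl : ℝ) ≤ (4:ℝ) ^ M * x := Nat.floor_le hxpos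
    have hfl_gt : (4:ℝ) ^ M * x < fl + 1 := Nat.lt_floor_add_one _
    have hNnat : (1:ℕ) ≤ 4 ^ M := Nat.one_le_pow M 4 (by norm_num)
    -- bounds on k
    have hge : (2:ℝ) * 4 ^ M < 3 * fl + 3 := by nlinarith
    have hgeN : 2 * 4 ^ M < 3 * fl + 3 := by exact_mod_cast hge
    have hb1 : 2 * 4 ^ M ≤ 3 * k + 2 := by omega
    have hb2 : k < 4 ^ M := by omega
    obtain ⟨ε, _, hεval⟩ := GNaux.key M k hb1 hb2
    refine ⟨GNaux.gnF ε, Set.mem_range_self ε, ?_⟩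
    rw [hεval, Real.dist_eq]
    have hk_le : (k : ℝ) ≤ (4:ℝ) ^ M * x := by
      have h' : (k:ℝ) ≤ (fl:ℝ) := by exact_mod_cast min_le_right _ _
      linarith
    have hk_ge : (4:ℝ) ^ M * x ≤ (k : ℝ) + 1 := by
      rcases le_or_gt fl (4 ^ M - 1) with h | h
      · have hkfl : k = fl := by omega
        rw [hkfl]; linarith
      · have hkval : k = 4 ^ M - 1 := by omega
        have he : ((k:ℝ)) + 1 = (4:ℝ) ^ M := by
          rw [hkval]
          push_cast [Nat.cast_sub hNnat]
          ring
        rw [he]; nlinarith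
    have hxy : x - ((k : ℝ) + 2/3) / 4 ^ M =
        ((4:ℝ) ^ M * x - k - 2/3) / 4 ^ M := by
      field_simp
      ring
    rw [hxy, abs_div, abs_of_pos hNpos]
    have habs : |(4:ℝ) ^ M * x - k - 2/3| ≤ 1 := by
      rw [abs_le]; constructor <;> linarith
    calc |(4:ℝ) ^ M * x - k - 2/3| / 4 ^ M ≤ 1 / 4 ^ M :=
          (div_le_div_iff_of_pos_right hNpos).mpr habs
      _ < δ := hM'
  exact GNaux.range_subset hx_mem
end

section
/- The multigeometric series associated with K_l fails Kakeya's condition infinitely often in both directions: with z_n as defined (tail Z_n = ∑_{k>n} z_k), for every i ≥ 1 the term z_{i(l+1)} = 2/(2l+2)^i strictly exceeds its tail Z_{i(l+1)} = (4l+1)/((2l+1)(2l+2)^i), so z_{i(l+1)} > Z_{i(l+1)} for all i ≥ 1, while z_n ≤ Z_n for all n not of the form i(l+1). -/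
open MeasureTheory

/-- The explicit formula for the sequence, reindexed from 0. -/
noncomputable def wf (l : ℕ) (k : ℕ) : ℝ :=
  (if k % (l+1) = 0 then (2*(l:ℝ)+1) else 2) / (2*(l:ℝ)+2)^(k/(l+1) + 1)

lemma wf_nonneg (l k : ℕ) : 0 ≤ wf l k := by
  unfold wf
  have h : (0:ℝ) < 2*(l:ℝ)+2 := by positivity
  split <;> positivity

lemma wf_apply (l q r : ℕ) (hr : r < l+1) :
    wf l (q*(l+1)+r) = (if r = 0 then (2*(l:ℝ)+1) else 2) / (2*(l:ℝ)+2)^(q+1) := by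
  have h1 : (q*(l+1)+r) % (l+1) = r := by
    rw [mul_comm q (l+1), Nat.mul_add_mod]
    exact Nat.mod_eq_of_lt hr
  have h2 : (q*(l+1)+r) / (l+1) = q := by
    rw [mul_comm q (l+1), Nat.mul_add_div (Nat.succ_pos l), Nat.div_eq_of_lt hr, Nat.add_zero]
  unfold wf
  rw [h1, h2]

lemma wf_inner_sum (l q : ℕ) :
    ∑ r : Fin (l+1), wf l (q*(l+1)+(r:ℕ)) = (4*(l:ℝ)+1) / (2*(l:ℝ)+2)^(q+1) := by
  rw [Fin.sum_univ_succ]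
  have h0 : wf l (q*(l+1)+((0 : Fin (l+1)):ℕ)) = (2*(l:ℝ)+1) / (2*(l:ℝ)+2)^(q+1) := by
    rw [Fin.val_zero, wf_apply l q 0 (Nat.succ_pos l)]
    simp
  have hs : ∀ i : Fin l, wf l (q*(l+1)+((Fin.succ i : Fin (l+1)):ℕ))
      = 2 / (2*(l:ℝ)+2)^(q+1) := by
    intro i
    rw [Fin.val_succ, wf_apply l q (i+1) (by omega)]
    simp
  rw [h0, Finset.sum_congr rfl (fun i _ => hs i), Finset.sum_const]
  simp only [Finset.card_univ, Fintype.card_fin, nsmul_eq_mul]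
  have hR : (0:ℝ) < (2*(l:ℝ)+2)^(q+1) := by positivity
  field_simp
  ring

lemma summable_wf_shift (l n : ℕ) : Summable (fun k => wf l (n + k)) := by
  have key : Summable (wf l) := by
    rw [← ((Nat.divModEquiv (l+1)).symm).summable_iff]
    have hfe : (wf l ∘ ⇑(Nat.divModEquiv (l+1)).symm)
        = fun p : ℕ × Fin (l+1) => wf l (p.1*(l+1)+(p.2:ℕ)) := by
      funext p; simp
    rw [hfe]
    rw [summable_prod_of_nonneg (fun p => wf_nonneg l _)]
    constructor
    · intro q; exact Summable.of_finite
    · have heq : (fun q => ∑' r : Fin (l+1), wf l (q*(l+1)+(r:ℕ)))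
          = fun q => (4*(l:ℝ)+1) / (2*(l:ℝ)+2)^(q+1) := by
        funext q
        rw [tsum_fintype, wf_inner_sum]
      rw [heq]
      have hx0 : (0:ℝ) ≤ (2*(l:ℝ)+2)⁻¹ := by positivity
      have hx1 : (2*(l:ℝ)+2)⁻¹ < 1 := by
        rw [inv_lt_one_iff₀]; right; nlinarith [Nat.cast_nonneg (α := ℝ) l]
      have hsg := (summable_geometric_of_lt_one hx0 hx1).mul_left
        ((4*(l:ℝ)+1) * (2*(l:ℝ)+2)⁻¹)
      apply hsg.congr
      intro q
      rw [inv_pow, mul_assoc, ← mul_inv, ← pow_succ', ← div_eq_mul_inv]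
  have h2 := (summable_nat_add_iff (f := wf l) n).2 key
  exact h2.congr (fun k => by rw [add_comm])

lemma wf_block_tail (l m : ℕ) :
    ∑' k : ℕ, wf l (m*(l+1) + k)
      = (4*(l:ℝ)+1) / ((2*(l:ℝ)+1) * (2*(l:ℝ)+2)^m) := by
  have hR : (0:ℝ) < 2*(l:ℝ)+2 := by positivity
  have h21 : (0:ℝ) < 2*(l:ℝ)+1 := by positivity
  have hx0 : (0:ℝ) ≤ (2*(l:ℝ)+2)⁻¹ := by positivity
  have hx1 : (2*(l:ℝ)+2)⁻¹ < 1 := by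
    rw [inv_lt_one_iff₀]; right; nlinarith [Nat.cast_nonneg (α := ℝ) l]
  have hsum : Summable (fun k => wf l (m*(l+1) + k)) := summable_wf_shift l (m*(l+1))
  have hsum2 : Summable (fun p : ℕ × Fin (l+1) => wf l ((m+p.1)*(l+1)+(p.2:ℕ))) := by
    refine (((Nat.divModEquiv (l+1)).symm).summable_iff.2 hsum).congr (fun p => ?_)
    simp only [Function.comp_apply, Nat.divModEquiv_symm_apply]
    congr 1; ring
  calc ∑' k, wf l (m*(l+1)+k)
      = ∑' p : ℕ × Fin (l+1), wf l (m*(l+1) + (Nat.divModEquiv (l+1)).symm p) :=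
        (((Nat.divModEquiv (l+1)).symm).tsum_eq fun k => wf l (m*(l+1)+k)).symm
    _ = ∑' p : ℕ × Fin (l+1), wf l ((m+p.1)*(l+1)+(p.2:ℕ)) := by
        congr 1; funext p
        simp only [Nat.divModEquiv_symm_apply]
        congr 1; ring
    _ = ∑' q : ℕ, ∑' r : Fin (l+1), wf l ((m+q)*(l+1)+(r:ℕ)) := Summable.tsum_prod hsum2
    _ = ∑' q : ℕ, (4*(l:ℝ)+1) / (2*(l:ℝ)+2)^(m+q+1) := by
        congr 1; funext q
        rw [tsum_fintype, wf_inner_sum]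
    _ = ∑' q : ℕ, ((4*(l:ℝ)+1) / (2*(l:ℝ)+2)^(m+1)) * ((2*(l:ℝ)+2)⁻¹)^q := by
        congr 1; funext q
        rw [show m+q+1 = (m+1)+q by ring, pow_add, div_mul_eq_div_div,
          div_eq_mul_inv ((4*(l:ℝ)+1) / (2*(l:ℝ)+2)^(m+1)), inv_pow]
    _ = ((4*(l:ℝ)+1) / (2*(l:ℝ)+2)^(m+1)) * (1 - (2*(l:ℝ)+2)⁻¹)⁻¹ := by
        rw [tsum_mul_left, tsum_geometric_of_lt_one hx0 hx1]
    _ = (4*(l:ℝ)+1) / ((2*(l:ℝ)+1) * (2*(l:ℝ)+2)^m) := by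
        have h1 : 1 - (2*(l:ℝ)+2)⁻¹ = (2*(l:ℝ)+1) / (2*(l:ℝ)+2) := by
          field_simp
          ring
        rw [h1, pow_succ]
        field_simp

theorem stmt19 (l : ℕ) (hl : 1 ≤ l) (z : ℕ → ℝ)
    (hz : ∀ i : ℕ, 1 ≤ i →
      z ((i - 1) * (l + 1) + 1) = (2 * l + 1) / (2 * l + 2) ^ i ∧
      ∀ j : ℕ, 1 ≤ j → j ≤ l →
        z ((i - 1) * (l + 1) + 1 + j) = 2 / (2 * l + 2) ^ i) :
    (∀ i : ℕ, 1 ≤ i → z (i * (l + 1)) > ∑' k : ℕ, z (i * (l + 1) + 1 + k)) ∧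
    (∀ n : ℕ, 1 ≤ n → (¬ ∃ i : ℕ, 1 ≤ i ∧ n = i * (l + 1)) →
      z n ≤ ∑' k : ℕ, z (n + 1 + k)) := by
  have hR : (0:ℝ) < 2*(l:ℝ)+2 := by positivity
  have h21 : (0:ℝ) < 2*(l:ℝ)+1 := by positivity
  -- z agrees with wf (shifted by one)
  have zeq : ∀ m : ℕ, z (m + 1) = wf l m := by
    intro m
    obtain ⟨q, r, hrlt, rfl⟩ : ∃ q r, r < l + 1 ∧ m = q * (l+1) + r :=
      ⟨m / (l+1), m % (l+1), Nat.mod_lt _ (Nat.succ_pos l), (Nat.div_add_mod' m (l+1)).symm⟩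
    obtain rfl | hpos := Nat.eq_zero_or_pos r
    · have h := (hz (q+1) (by omega)).1
      simp only [Nat.add_sub_cancel] at h
      show z (q * (l+1) + 1) = wf l (q * (l+1) + 0)
      rw [h, wf_apply l q 0 (Nat.succ_pos l)]
      simp
    · have h := (hz (q+1) (by omega)).2 r hpos (by omega)
      simp only [Nat.add_sub_cancel] at h
      rw [show q * (l+1) + r + 1 = q * (l+1) + 1 + r by omega, h,
        wf_apply l q r hrlt, if_neg (by omega)]
  constructor
  · -- failure at block ends
    intro i hi
    obtain ⟨i', rfl⟩ : ∃ i', i = i' + 1 := ⟨i - 1, by omega⟩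
    have hzn : z ((i'+1) * (l + 1)) = 2 / (2*(l:ℝ)+2) ^ (i'+1) := by
      have h := (hz (i'+1) (by omega)).2 l hl le_rfl
      simp only [Nat.add_sub_cancel] at h
      rw [show (i'+1) * (l+1) = i' * (l+1) + 1 + l by ring, h]
    have htail : ∑' k : ℕ, z ((i'+1) * (l + 1) + 1 + k)
        = (4*(l:ℝ)+1) / ((2*(l:ℝ)+1) * (2*(l:ℝ)+2)^(i'+1)) := by
      rw [← wf_block_tail l (i'+1)]
      congr 1; funext k
      rw [show (i'+1) * (l+1) + 1 + k = ((i'+1) * (l+1) + k) + 1 by ring, zeq]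
    rw [hzn, htail, gt_iff_lt, div_lt_div_iff₀ (by positivity) (by positivity)]
    have hP : (0:ℝ) < (2*(l:ℝ)+2)^(i'+1) := by positivity
    nlinarith [hP]
  · -- Kakeya condition holds elsewhere
    intro n hn hnot
    obtain ⟨q, j, hjlt, hmq⟩ : ∃ q j, j < l + 1 ∧ n - 1 = q * (l+1) + j :=
      ⟨(n-1) / (l+1), (n-1) % (l+1), Nat.mod_lt _ (Nat.succ_pos l),
        (Nat.div_add_mod' (n-1) (l+1)).symm⟩
    have hnq : n = q * (l+1) + 1 + j := by omega
    have hjl : j < l := by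
      by_contra h
      have hjeq : j = l := by omega
      exact hnot ⟨q + 1, by omega, by rw [hnq, hjeq]; ring⟩
    -- rewrite the tail in terms of wf
    have htail0 : ∑' k : ℕ, z (n + 1 + k) = ∑' k : ℕ, wf l (n + k) := by
      congr 1; funext k
      rw [show n + 1 + k = (n + k) + 1 by ring, zeq]
    -- peel the first l - j terms
    have hpeel := (summable_wf_shift l n).sum_add_tsum_nat_add (l - j)
    have hstart : n + (l - j) = (q+1)*(l+1) := by
      rw [show (q+1)*(l+1) = q*(l+1) + (l+1) by ring]
      omega
    have hshift : ∑' k : ℕ, wf l (n + (k + (l - j)))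
        = ∑' k : ℕ, wf l ((q+1)*(l+1) + k) := by
      congr 1; funext k
      congr 1
      omega
    have hfin : ∑ i ∈ Finset.range (l - j), wf l (n + i)
        = ((l:ℝ) - (j:ℝ)) * (2 / (2*(l:ℝ)+2)^(q+1)) := by
      have hterm : ∀ i ∈ Finset.range (l - j),
          wf l (n + i) = 2 / (2*(l:ℝ)+2)^(q+1) := by
        intro i hi
        rw [Finset.mem_range] at hi
        rw [show n + i = q * (l+1) + (1 + j + i) by omega,
          wf_apply l q (1+j+i) (by omega), if_neg (by omega)]
      rw [Finset.sum_congr rfl hterm, Finset.sum_const, Finset.card_range,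
        nsmul_eq_mul]
      congr 1
      rw [Nat.cast_sub (by omega)]
    have htail : ∑' k : ℕ, z (n + 1 + k)
        = ((l:ℝ) - (j:ℝ)) * (2 / (2*(l:ℝ)+2)^(q+1))
          + (4*(l:ℝ)+1) / ((2*(l:ℝ)+1) * (2*(l:ℝ)+2)^(q+1)) := by
      rw [htail0, ← hpeel, hfin, hshift, wf_block_tail l (q+1)]
    rw [htail]
    have hP : (0:ℝ) < (2*(l:ℝ)+2)^(q+1) := by positivity
    obtain rfl | hpos := Nat.eq_zero_or_pos j
    · -- n starts a block
      have hzn : z n = (2*(l:ℝ)+1) / (2*(l:ℝ)+2)^(q+1) := by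
        have h := (hz (q+1) (by omega)).1
        simp only [Nat.add_sub_cancel] at h
        rw [show n = q*(l+1)+1 by omega, h]
      have key : 1/(2*(l:ℝ)+2)^(q+1)
          ≤ (4*(l:ℝ)+1) / ((2*(l:ℝ)+1) * (2*(l:ℝ)+2)^(q+1)) := by
        rw [div_le_div_iff₀ hP (by positivity)]
        nlinarith [hP, mul_nonneg (by positivity : (0:ℝ) ≤ 2*(l:ℝ)) hP.le]
      have hsplit : (2*(l:ℝ)+1)/(2*(l:ℝ)+2)^(q+1)
          = ((l:ℝ) - ((0:ℕ):ℝ)) * (2/(2*(l:ℝ)+2)^(q+1)) + 1/(2*(l:ℝ)+2)^(q+1) := by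
        field_simp
        ring
      rw [hzn]
      linarith [key, hsplit]
    · -- n is inside a block
      have hzn : z n = 2 / (2*(l:ℝ)+2)^(q+1) := by
        have h := (hz (q+1) (by omega)).2 j hpos (by omega)
        simp only [Nat.add_sub_cancel] at h
        rw [hnq, h]
      rw [hzn]
      have h1 : (1:ℝ) ≤ (l:ℝ) - (j:ℝ) := by
        have : (j:ℝ) + 1 ≤ (l:ℝ) := by exact_mod_cast hjl
        linarith
      have h2 : 2 / (2*(l:ℝ)+2)^(q+1) ≤ ((l:ℝ) - (j:ℝ)) * (2 / (2*(l:ℝ)+2)^(q+1)) :=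
        le_mul_of_one_le_left (by positivity) h1
      have h3 : (0:ℝ) ≤ (4*(l:ℝ)+1) / ((2*(l:ℝ)+1) * (2*(l:ℝ)+2)^(q+1)) := by positivity
      linarith
end
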